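/- arXiv:1309.0046 — 5 statements merged into one kernel-verified Lean document; each statement's English description precedes it below -/
import Mathlib

section
/- Let X be a nonnegative continuous local martingale on [0,T] with X_0 = x ≥ 0, and let τ^β := inf{s ≥ 0 : X_s ≥ β} ∧ T. Then lim_{β→∞} β·P(τ^β < T) = x − E[X_T]; in particular the limit is at most x. -/
/-!
For `β > x` the path of `X` stays in `[0, β]` up to `τ^β`, so after localisation, dominated
convergence and optional sampling give `E[X_{τ^β}] = x`. Optional sampling for a continuous
martingale at a general bounded stopping time follows from the countably-valued case by rounding
the stopping time up to finer and finer grids: the sampled values are conditional expectations of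
`M_T`, hence uniformly integrable, and converge by path continuity. Since `X_{τ^β} = β` on
`{τ^β < T}` and `X_{τ^β} = X_T` elsewhere, `β P(τ^β < T) = x - E[X_T] + E[X_T; τ^β < T]`, and the
last term vanishes as `β → ∞` because each path is bounded on `[0, T]`.
-/

open MeasureTheory Filter Set
open scoped Topology

/-- `M` is a local martingale w.r.t. the filtration `ℱ` under `P`: there is a
localizing sequence of stopping times increasing a.s. to `∞` such that each
stopped process is a martingale. -/
def IsLocMart {Ω : Type*} {m : MeasurableSpace Ω} (ℱ : Filtration ℝ m)
    (M : ℝ → Ω → ℝ) (P : Measure Ω) : Prop :=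
  ∃ π : ℕ → Ω → ℝ, (∀ n, IsStoppingTime ℱ (fun ω => (π n ω : WithTop ℝ))) ∧
    (∀ ω, Monotone fun n => π n ω) ∧
    (∀ᵐ ω ∂P, Tendsto (fun n => π n ω) atTop atTop) ∧
    ∀ n, Martingale (stoppedProcess M (fun ω => (π n ω : WithTop ℝ))) ℱ P

section HittingTime

variable {Ω ι E : Type*} [ConditionallyCompleteLinearOrder ι] [TopologicalSpace ι] [OrderTopology ι]
  [TopologicalSpace E] {u : ι → Ω → E} {s : Set E} {n m : ι} {ω : Ω}

theorem hittingBtwn_mem_set_of_isClosed (hu : Continuous fun t => u t ω) (hs : IsClosed s)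
    (h_exists : ∃ j ∈ Icc n m, u j ω ∈ s) : u (hittingBtwn u s n m ω) ω ∈ s := by
  rw [hittingBtwn, if_pos h_exists]
  obtain ⟨j, hj⟩ := h_exists
  exact (isClosed_Icc.inter (hs.preimage hu)).csInf_mem ⟨j, hj⟩ bddBelow_Icc.inter_of_left |>.2

theorem hittingBtwn_le_iff_of_lt_of_isClosed (hu : Continuous fun t => u t ω) (hs : IsClosed s)
    {i : ι} (hi : i < m) : hittingBtwn u s n m ω ≤ i ↔ ∃ j ∈ Icc n i, u j ω ∈ s := by
  constructor
  · intro h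
    have h_exists : ∃ j ∈ Icc n m, u j ω ∈ s := by
      by_contra h_none
      rw [hittingBtwn, if_neg h_none] at h
      exact hi.not_ge h
    exact ⟨_, ⟨le_hittingBtwn_of_exists h_exists, h⟩,
      hittingBtwn_mem_set_of_isClosed hu hs h_exists⟩
  · rintro ⟨j, hj, hjs⟩
    exact (hittingBtwn_le_of_mem hj.1 (hj.2.trans hi.le) hjs).trans hj.2

end HittingTime

theorem exists_le_iff_forall_exists_lt_of_subset_closure {α : Type*} [TopologicalSpace α]
    {f : α → ℝ} (hf : Continuous f) {K D : Set α} (hK : IsCompact K) (hDK : D ⊆ K)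
    (hKD : K ⊆ closure D) (β : ℝ) :
    (∃ s ∈ K, β ≤ f s) ↔ ∀ j : ℕ, ∃ q ∈ D, β - 1 / (j + 1) < f q := by
  constructor
  · rintro ⟨s, hsK, hs⟩ j
    obtain ⟨q, hq, hqD⟩ := mem_closure_iff.1 (hKD hsK) _ (isOpen_lt continuous_const hf)
      (show β - 1 / (j + 1) < f s by linarith [Nat.one_div_pos_of_nat (α := ℝ) (n := j)])
    exact ⟨q, hqD, hq⟩
  · intro h
    obtain ⟨q₀, hq₀, -⟩ := h 0
    obtain ⟨s, hsK, hmax⟩ := hK.exists_isMaxOn ⟨q₀, hDK hq₀⟩ hf.continuousOn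
    refine ⟨s, hsK, le_of_forall_pos_lt_add fun ε hε => ?_⟩
    obtain ⟨j, hj⟩ := exists_nat_one_div_lt hε
    obtain ⟨q, hqD, hq⟩ := h j
    have hqs : f q ≤ f s := hmax (hDK hqD)
    linarith

section RealPaths

variable {Ω : Type*} {m : MeasurableSpace Ω} {ℱ : Filtration ℝ m} {X : ℝ → Ω → ℝ}
  {β n T : ℝ}

theorem measurableSet_exists_le_of_continuous (hX : Adapted ℱ X)
    (hcont : ∀ ω, Continuous fun t => X t ω) (a t : ℝ) :
    MeasurableSet[ℱ t] {ω | ∃ s ∈ Icc a t, β ≤ X s ω} := by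
  obtain ⟨D, hDsub, hDcount, hDdense⟩ :=
    (TopologicalSpace.IsSeparable.of_separableSpace (Icc a t)).exists_countable_dense_subset
  have hset : {ω | ∃ s ∈ Icc a t, β ≤ X s ω}
      = ⋂ j : ℕ, ⋃ q ∈ D, {ω | β - 1 / (j + 1) < X q ω} := by
    ext ω
    simpa only [mem_ofPred_eq, mem_iInter, mem_iUnion, exists_prop] using
      exists_le_iff_forall_exists_lt_of_subset_closure (hcont ω) isCompact_Icc hDsub hDdense β
  rw [hset]
  exact .iInter fun j => .biUnion hDcount fun q hq =>
    ℱ.mono (hDsub hq).2 _ (hX q measurableSet_Ioi)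

theorem isStoppingTime_hittingBtwn_Ici (hX : Adapted ℱ X)
    (hcont : ∀ ω, Continuous fun t => X t ω) :
    IsStoppingTime ℱ fun ω => ((hittingBtwn X (Ici β) n T ω : ℝ) : WithTop ℝ) := by
  intro t
  simp only [WithTop.coe_le_coe]
  rcases lt_or_ge t T with htT | hTt
  · simp_rw [hittingBtwn_le_iff_of_lt_of_isClosed (hcont _) isClosed_Ici htT, mem_Ici]
    exact measurableSet_exists_le_of_continuous hX hcont n t
  · simp_rw [(hittingBtwn_le _).trans hTt, ofPred_true]
    exact .univ

theorem measurableSet_hittingBtwn_Ici_lt (hX : Adapted ℱ X)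
    (hcont : ∀ ω, Continuous fun t => X t ω) :
    MeasurableSet {ω | hittingBtwn X (Ici β) n T ω < T} :=
  ℱ.le T _ <| by
    simpa only [WithTop.coe_lt_coe] using
      (isStoppingTime_hittingBtwn_Ici hX hcont).measurableSet_lt T

variable {ω : Ω}

theorem le_of_le_hittingBtwn_Ici (hcont : Continuous fun t => X t ω) (hn : X n ω < β) {s : ℝ}
    (hns : n ≤ s) (hs : s ≤ hittingBtwn X (Ici β) n T ω) : X s ω ≤ β := by
  rcases (hns.trans hs).eq_or_lt with hτ | hτ
  · rw [le_antisymm (hs.trans hτ.ge) hns]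
    exact hn.le
  · have hbelow : Ico n (hittingBtwn X (Ici β) n T ω) ⊆ {r | X r ω ≤ β} := fun r hr =>
      (not_le.1 (notMem_of_lt_hittingBtwn hr.2 hr.1)).le
    exact closure_minimal hbelow (isClosed_le hcont continuous_const)
      (by rw [closure_Ico hτ.ne]; exact ⟨hns, hs⟩)

theorem hittingBtwn_Ici_apply_eq (hcont : Continuous fun t => X t ω) (hn : X n ω < β)
    (hT : hittingBtwn X (Ici β) n T ω < T) : X (hittingBtwn X (Ici β) n T ω) ω = β := by
  obtain ⟨j, hj, hjβ⟩ := (hittingBtwn_lt_iff T le_rfl).1 hT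
  have h_exists : ∃ j ∈ Icc n T, X j ω ∈ Ici β := ⟨j, Ico_subset_Icc_self hj, hjβ⟩
  exact le_antisymm (le_of_le_hittingBtwn_Ici hcont hn (le_hittingBtwn_of_exists h_exists) le_rfl)
    (hittingBtwn_mem_set_of_isClosed hcont isClosed_Ici h_exists)

theorem antitone_setOf_hittingBtwn_Ici_lt :
    Antitone fun β => {ω | hittingBtwn X (Ici β) n T ω < T} :=
  fun _ _ hβ _ hω => (hittingBtwn_apply_anti X n T _ (Ici_subset_Ici.2 hβ)).trans_lt hω

theorem iInter_setOf_hittingBtwn_Ici_lt (hcont : ∀ ω, Continuous fun t => X t ω) :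
    ⋂ β, {ω | hittingBtwn X (Ici β) n T ω < T} = ∅ := by
  refine eq_empty_of_forall_notMem fun ω hω => ?_
  obtain ⟨C, hC⟩ := ((isCompact_Icc (a := n) (b := T)).image (hcont ω)).bddAbove
  obtain ⟨j, hj, hjβ⟩ := (hittingBtwn_lt_iff T le_rfl).1 (mem_iInter.1 hω (C + 1))
  linarith [mem_Ici.1 hjβ, hC (mem_image_of_mem _ (Ico_subset_Icc_self hj))]

end RealPaths

noncomputable def gridCeil (k : ℕ) (r : ℝ) : ℝ := ⌈r * (k + 1)⌉ / (k + 1)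

section GridCeil

variable {k : ℕ} {r t : ℝ}

theorem le_gridCeil : r ≤ gridCeil k r := by
  rw [gridCeil, le_div_iff₀ (by positivity)]
  exact Int.le_ceil _

theorem gridCeil_le_add : gridCeil k r ≤ r + 1 / (k + 1) := by
  rw [gridCeil, div_le_iff₀ (by positivity), add_mul, one_div_mul_cancel (by positivity)]
  exact (Int.ceil_lt_add_one _).le

theorem gridCeil_le_iff : gridCeil k r ≤ t ↔ r ≤ ⌊t * (k + 1)⌋ / (k + 1) := by
  rw [gridCeil, div_le_iff₀ (by positivity), le_div_iff₀ (by positivity), ← Int.le_floor,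
    Int.ceil_le]

theorem floor_mul_div_le_self : (⌊t * (k + 1)⌋ : ℝ) / (k + 1) ≤ t := by
  rw [div_le_iff₀ (by positivity)]
  exact Int.floor_le _

theorem countable_range_gridCeil (k : ℕ) : (range (gridCeil k)).Countable :=
  (countable_range fun z : ℤ => (z : ℝ) / (k + 1)).mono <| by
    rintro - ⟨r, rfl⟩
    exact ⟨_, rfl⟩

theorem tendsto_gridCeil (r : ℝ) : Tendsto (fun k => gridCeil k r) atTop (𝓝 r) := by
  have h := (tendsto_one_div_add_atTop_nhds_zero_nat).const_add r
  rw [add_zero] at h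
  exact tendsto_of_tendsto_of_tendsto_of_le_of_le tendsto_const_nhds h
    (fun _ => le_gridCeil) fun _ => gridCeil_le_add

end GridCeil

theorem MeasureTheory.IsStoppingTime.exists_seq_tendsto_of_countable_range {Ω : Type*}
    {m : MeasurableSpace Ω} {ℱ : Filtration ℝ m} {τ : Ω → ℝ}
    (hτ : IsStoppingTime ℱ fun ω => (τ ω : WithTop ℝ)) {T : ℝ} (hτT : ∀ ω, τ ω ≤ T) :
    ∃ σ : ℕ → Ω → ℝ, (∀ k, IsStoppingTime ℱ fun ω => (σ k ω : WithTop ℝ)) ∧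
      (∀ k, (range fun ω => (σ k ω : WithTop ℝ)).Countable) ∧
      (∀ k ω, τ ω ≤ σ k ω ∧ σ k ω ≤ T) ∧ ∀ ω, Tendsto (fun k => σ k ω) atTop (𝓝 (τ ω)) := by
  refine ⟨fun k ω => min (gridCeil k (τ ω)) T, fun k => ?_, fun k => ?_,
    fun k ω => ⟨le_min le_gridCeil (hτT ω), min_le_right _ _⟩, fun ω => ?_⟩
  · have hceil : IsStoppingTime ℱ fun ω => (gridCeil k (τ ω) : WithTop ℝ) := by
      intro t
      simp_rw [WithTop.coe_le_coe, gridCeil_le_iff]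
      exact ℱ.mono floor_mul_div_le_self _ (by simpa only [WithTop.coe_le_coe] using hτ _)
    simpa only [WithTop.coe_min] using hceil.min_const T
  · refine (((countable_range_gridCeil k).image fun r => min r T).image
      ((↑) : ℝ → WithTop ℝ)).mono ?_
    rintro - ⟨ω, rfl⟩
    exact ⟨_, ⟨_, ⟨τ ω, rfl⟩, rfl⟩, rfl⟩
  · simpa only [min_eq_left (hτT ω)] using
      (tendsto_gridCeil (τ ω)).min (tendsto_const_nhds (x := T))

namespace MeasureTheory.UniformIntegrable

variable {α G : Type*} {m : MeasurableSpace α} {μ : Measure α} [NormedAddCommGroup G]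
  {f : ℕ → α → G} {g : α → G}

theorem memLp_of_tendsto_ae {p : ENNReal} (hf : UniformIntegrable f p μ)
    (hfg : ∀ᵐ x ∂μ, Tendsto (fun n => f n x) atTop (𝓝 (g x))) : MemLp g p μ := by
  obtain ⟨hmeas, -, C, hC⟩ := hf
  exact ⟨aestronglyMeasurable_of_tendsto_ae atTop hmeas hfg,
    (Lp.eLpNorm_le_of_ae_tendsto (.of_forall hC) hmeas hfg).trans_lt ENNReal.coe_lt_top⟩

theorem tendsto_setIntegral_of_tendsto_ae [IsFiniteMeasure μ] [NormedSpace ℝ G] [CompleteSpace G]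
    (hf : UniformIntegrable f 1 μ) (hfg : ∀ᵐ x ∂μ, Tendsto (fun n => f n x) atTop (𝓝 (g x)))
    (s : Set α) : Tendsto (fun n => ∫ x in s, f n x ∂μ) atTop (𝓝 (∫ x in s, g x ∂μ)) := by
  have hg := hf.memLp_of_tendsto_ae hfg
  exact tendsto_setIntegral_of_L1' g hg.1 (.of_forall fun n => (hf.memLp n).integrable le_rfl)
    (tendsto_Lp_finite_of_tendsto_ae le_rfl ENNReal.one_ne_top hf.1 hg hf.2.1 hfg) s

end MeasureTheory.UniformIntegrable

namespace MeasureTheory.Martingale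

variable {Ω : Type*} {m : MeasurableSpace Ω} {ℱ : Filtration ℝ m} {P : Measure Ω}
  [IsFiniteMeasure P] {M : ℝ → Ω → ℝ} {τ : Ω → ℝ} {T : ℝ}

theorem exists_condExp_tendsto_of_continuous (hM : Martingale M ℱ P)
    (hcont : ∀ ω, Continuous fun t => M t ω) (hτ : IsStoppingTime ℱ fun ω => (τ ω : WithTop ℝ))
    (hτT : ∀ ω, τ ω ≤ T) :
    ∃ 𝒢 : ℕ → MeasurableSpace Ω, (∀ k, 𝒢 k ≤ m) ∧ (∀ k, hτ.measurableSpace ≤ 𝒢 k) ∧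
      ∀ᵐ ω ∂P, Tendsto (fun k => P[M T | 𝒢 k] ω) atTop (𝓝 (M (τ ω) ω)) := by
  obtain ⟨σ, hσ, hσc, hσb, hστ⟩ := hτ.exists_seq_tendsto_of_countable_range hτT
  refine ⟨fun k => (hσ k).measurableSpace, fun k => (hσ k).measurableSpace_le,
    fun k => hτ.measurableSpace_mono (hσ k) fun ω => WithTop.coe_le_coe.2 (hσb k ω).1, ?_⟩
  have hsample : ∀ᵐ ω ∂P, ∀ k, M (σ k ω) ω = P[M T | (hσ k).measurableSpace] ω :=
    ae_all_iff.2 fun k => hM.stoppedValue_ae_eq_condExp_of_le_const_of_countable_range (hσ k)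
      (fun ω => WithTop.coe_le_coe.2 (hσb k ω).2) (hσc k)
  filter_upwards [hsample] with ω hω
  exact (((hcont ω).tendsto _).comp (hστ ω)).congr hω

theorem integrable_stoppedValue_of_continuous (hM : Martingale M ℱ P)
    (hcont : ∀ ω, Continuous fun t => M t ω) (hτ : IsStoppingTime ℱ fun ω => (τ ω : WithTop ℝ))
    (hτT : ∀ ω, τ ω ≤ T) : Integrable (fun ω => M (τ ω) ω) P := by
  obtain ⟨𝒢, h𝒢, -, hlim⟩ := hM.exists_condExp_tendsto_of_continuous hcont hτ hτT
  exact memLp_one_iff_integrable.1 <|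
    ((hM.integrable T).uniformIntegrable_condExp h𝒢).memLp_of_tendsto_ae hlim

theorem setIntegral_stoppedValue_of_continuous (hM : Martingale M ℱ P)
    (hcont : ∀ ω, Continuous fun t => M t ω) (hτ : IsStoppingTime ℱ fun ω => (τ ω : WithTop ℝ))
    (hτT : ∀ ω, τ ω ≤ T) {A : Set Ω} (hA : MeasurableSet[hτ.measurableSpace] A) :
    ∫ ω in A, M (τ ω) ω ∂P = ∫ ω in A, M T ω ∂P := by
  obtain ⟨𝒢, h𝒢, hτ𝒢, hlim⟩ := hM.exists_condExp_tendsto_of_continuous hcont hτ hτT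
  refine tendsto_nhds_unique
    (((hM.integrable T).uniformIntegrable_condExp h𝒢).tendsto_setIntegral_of_tendsto_ae hlim A) ?_
  simp_rw [setIntegral_condExp (h𝒢 _) (hM.integrable T) (hτ𝒢 _ A hA)]
  exact tendsto_const_nhds

end MeasureTheory.Martingale

theorem stoppedProcess_coe_apply {Ω : Type*} (X : ℝ → Ω → ℝ) (π : Ω → ℝ) (t : ℝ) (ω : Ω) :
    stoppedProcess X (fun ω => (π ω : WithTop ℝ)) t ω = X (min t (π ω)) ω := by
  rw [stoppedProcess, ← WithTop.coe_min]
  rfl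

theorem tendsto_setIntegral_min_of_abs_le {Ω : Type*} {m : MeasurableSpace Ω} {P : Measure Ω}
    [IsFiniteMeasure P] {X : ℝ → Ω → ℝ} {π : ℕ → Ω → ℝ}
    (hπ : ∀ᵐ ω ∂P, Tendsto (fun n => π n ω) atTop atTop)
    (hB : ∀ n, MeasurableSet {ω | 0 ≤ π n ω}) {ρ : Ω → ℝ} {T C : ℝ} (hρ : ∀ ω, ρ ω ∈ Icc 0 T)
    (hC : ∀ ω, ∀ t ∈ Icc 0 (ρ ω), |X t ω| ≤ C)
    (hmeas : ∀ n, AEStronglyMeasurable (fun ω => X (min (ρ ω) (π n ω)) ω) P) :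
    Tendsto (fun n => ∫ ω in {ω | 0 ≤ π n ω}, X (min (ρ ω) (π n ω)) ω ∂P) atTop
      (𝓝 (∫ ω, X (ρ ω) ω ∂P)) := by
  simp_rw [← integral_indicator (hB _)]
  refine tendsto_integral_of_dominated_convergence (fun _ => C)
    (fun n => (hmeas n).indicator (hB n)) (integrable_const C) (fun n => .of_forall fun ω => ?_) ?_
  · by_cases hω : ω ∈ {ω | 0 ≤ π n ω}
    · rw [indicator_of_mem hω, Real.norm_eq_abs]
      exact hC ω _ ⟨le_min (hρ ω).1 hω, min_le_left _ _⟩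
    · rw [indicator_of_notMem hω, norm_zero]
      exact (abs_nonneg _).trans (hC ω _ ⟨(hρ ω).1, le_rfl⟩)
  · filter_upwards [hπ] with ω hω
    refine tendsto_const_nhds.congr' ?_
    filter_upwards [hω.eventually_ge_atTop T] with n hn
    have hρπ : ρ ω ≤ π n ω := (hρ ω).2.trans hn
    rw [indicator_of_mem (show ω ∈ {ω | 0 ≤ π n ω} from (hρ ω).1.trans hρπ), min_eq_left hρπ]

namespace IsLocMart

variable {Ω : Type*} {m : MeasurableSpace Ω} {ℱ : Filtration ℝ m} {P : Measure Ω}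
  [IsFiniteMeasure P] {X : ℝ → Ω → ℝ}

theorem integral_stoppedValue_eq_of_bounded (hX : IsLocMart ℱ X P)
    (hcont : ∀ ω, Continuous fun t => X t ω) {τ : Ω → ℝ}
    (hτ : IsStoppingTime ℱ fun ω => (τ ω : WithTop ℝ)) {T C : ℝ} (hT : 0 ≤ T)
    (hτT : ∀ ω, τ ω ∈ Icc 0 T) (hC : ∀ ω, ∀ t ∈ Icc 0 (τ ω), |X t ω| ≤ C) :
    ∫ ω, X (τ ω) ω ∂P = ∫ ω, X 0 ω ∂P := by
  obtain ⟨π, hπ, -, hπtop, hmart⟩ := hX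
  -- On `{π n < 0}` the stopped process starts from `X (π n)` instead of `X 0`.
  set B : ℕ → Set Ω := fun n => {ω | 0 ≤ π n ω}
  have hB₀ : ∀ n, MeasurableSet[ℱ 0] (B n) := fun n => by
    simpa only [WithTop.coe_le_coe] using (hπ n).measurableSet_ge 0
  have hstopped : ∀ n ω, Continuous fun t => stoppedProcess X (fun ω => (π n ω : WithTop ℝ)) t ω :=
    fun n ω => by
      simp_rw [stoppedProcess_coe_apply]
      exact (hcont ω).comp (continuous_id.min continuous_const)
  have hstep : ∀ n,
      ∫ ω in B n, X (min (τ ω) (π n ω)) ω ∂P = ∫ ω in B n, X (min 0 (π n ω)) ω ∂P := by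
    intro n
    have hτB : MeasurableSet[hτ.measurableSpace] (B n) :=
      hτ.le_measurableSpace_of_const_le (fun ω => WithTop.coe_le_coe.2 (hτT ω).1) _ (hB₀ n)
    simp_rw [← stoppedProcess_coe_apply]
    rw [(hmart n).setIntegral_stoppedValue_of_continuous (hstopped n) hτ (fun ω => (hτT ω).2) hτB,
      ← (hmart n).setIntegral_eq hT (hB₀ n)]
  have hτmeas : ∀ n, AEStronglyMeasurable (fun ω => X (min (τ ω) (π n ω)) ω) P := fun n => by
    simpa only [stoppedProcess_coe_apply] using ((hmart n).integrable_stoppedValue_of_continuous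
      (hstopped n) hτ fun ω => (hτT ω).2).aestronglyMeasurable
  have h0meas : ∀ n, AEStronglyMeasurable (fun ω => X (min 0 (π n ω)) ω) P := fun n =>
    (((hmart n).1 0).mono (ℱ.le 0)).aestronglyMeasurable.congr
      (.of_forall (stoppedProcess_coe_apply X (π n) 0))
  have hB : ∀ n, MeasurableSet (B n) := fun n => ℱ.le 0 _ (hB₀ n)
  exact tendsto_nhds_unique
    ((tendsto_setIntegral_min_of_abs_le hπtop hB hτT hC hτmeas).congr hstep)
    (tendsto_setIntegral_min_of_abs_le hπtop hB (fun ω => ⟨le_rfl, hT⟩)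
      (fun ω t ht => hC ω t ⟨ht.1, ht.2.trans (hτT ω).1⟩) h0meas)

end IsLocMart

theorem IsLocMart.mul_measureReal_add_setIntegral_compl_eq {Ω : Type*} {m : MeasurableSpace Ω}
    {ℱ : Filtration ℝ m} {P : Measure Ω} [IsProbabilityMeasure P] {X : ℝ → Ω → ℝ} {x β T : ℝ}
    (hX : IsLocMart ℱ X P) (hadapted : Adapted ℱ X) (hcont : ∀ ω, Continuous fun t => X t ω)
    (hnonneg : ∀ t ω, 0 ≤ X t ω) (hX0 : ∀ ω, X 0 ω = x) (hXT : Integrable (X T) P)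
    (hT : 0 ≤ T) (hβ : x < β) :
    β * P.real {ω | hittingBtwn X (Ici β) 0 T ω < T} +
      ∫ ω in {ω | hittingBtwn X (Ici β) 0 T ω < T}ᶜ, X T ω ∂P = x := by
  set τ := hittingBtwn X (Ici β) 0 T
  set S := {ω | τ ω < T}
  have hstart : ∀ ω, X 0 ω < β := fun ω => (hX0 ω).trans_lt hβ
  have hpath : ∀ ω, X (τ ω) ω = S.piecewise (fun _ => β) (X T) ω := fun ω => by
    by_cases hω : ω ∈ S
    · rw [piecewise_eq_of_mem _ _ _ hω]
      exact hittingBtwn_Ici_apply_eq (hcont ω) (hstart ω) hω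
    · have hτω : τ ω = T := (hittingBtwn_le ω).antisymm (not_lt.1 hω)
      rw [piecewise_eq_of_notMem _ _ _ hω, hτω]
  have hbounded : ∀ ω, ∀ t ∈ Icc 0 (τ ω), |X t ω| ≤ β := fun ω t ht =>
    (abs_of_nonneg (hnonneg t ω)).trans_le
      (le_of_le_hittingBtwn_Ici (hcont ω) (hstart ω) ht.1 ht.2)
  calc β * P.real S + ∫ ω in Sᶜ, X T ω ∂P = ∫ ω, S.piecewise (fun _ => β) (X T) ω ∂P := by
        rw [integral_piecewise (measurableSet_hittingBtwn_Ici_lt hadapted hcont)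
          (integrable_const β).integrableOn hXT.integrableOn, setIntegral_const, smul_eq_mul,
          mul_comm]
    _ = ∫ ω, X (τ ω) ω ∂P := integral_congr_ae (.of_forall fun ω => (hpath ω).symm)
    _ = ∫ ω, X 0 ω ∂P := hX.integral_stoppedValue_eq_of_bounded hcont
        (isStoppingTime_hittingBtwn_Ici hadapted hcont) hT
        (fun ω => ⟨le_hittingBtwn hT ω, hittingBtwn_le ω⟩) hbounded
    _ = x := by simp [hX0]

theorem stmt0_general {Ω : Type*} {m : MeasurableSpace Ω} (ℱ : Filtration ℝ m)
    (P : Measure Ω) [IsProbabilityMeasure P]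
    (X : ℝ → Ω → ℝ) (x T : ℝ) (hT : 0 < T)
    (hX0 : ∀ ω, X 0 ω = x)
    (hcont : ∀ ω, Continuous fun s => X s ω)
    (hnonneg : ∀ s ω, 0 ≤ X s ω)
    (hloc : IsLocMart ℱ X P)
    (hsup : Supermartingale X ℱ P) :
    Tendsto (fun β : ℝ => β * (P {ω | hittingBtwn X (Ici β) 0 T ω < T}).toReal)
        atTop (𝓝 (x - ∫ ω, X T ω ∂P)) ∧
      x - ∫ ω, X T ω ∂P ≤ x := by
  have hXT : Integrable (X T) P := hsup.integrable T
  have hadapted : Adapted ℱ X := hsup.stronglyAdapted.adapted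
  set S : ℝ → Set Ω := fun β => {ω | hittingBtwn X (Ici β) 0 T ω < T}
  have hS : ∀ β, MeasurableSet (S β) := fun _ => measurableSet_hittingBtwn_Ici_lt hadapted hcont
  have hidentity : ∀ β > x,
      β * (P (S β)).toReal = x - ∫ ω, X T ω ∂P + ∫ ω in S β, X T ω ∂P := fun β hβ => by
    have h := hloc.mul_measureReal_add_setIntegral_compl_eq hadapted hcont hnonneg hX0 hXT hT.le hβ
    rw [setIntegral_compl (hS β) hXT] at h
    rw [← measureReal_def]
    linarith
  have hvanish : Tendsto (fun β => ∫ ω in S β, X T ω ∂P) atTop (𝓝 0) := by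
    simpa [S, iInter_setOf_hittingBtwn_Ici_lt hcont] using
      tendsto_setIntegral_of_antitone hS antitone_setOf_hittingBtwn_Ici_lt ⟨0, hXT.integrableOn⟩
  refine ⟨?_, sub_le_self _ (integral_nonneg (hnonneg T))⟩
  have h := (tendsto_const_nhds (x := x - ∫ ω, X T ω ∂P)).add hvanish
  rw [add_zero] at h
  exact h.congr' ((eventually_gt_atTop x).mono fun β hβ => (hidentity β hβ).symm)

/-- For a nonnegative continuous local martingale `X` on `[0,T]` with
`X_0 = x ≥ 0`, and `τ^β` the first hitting time of level `β` capped at `T`,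
`lim_{β→∞} β·P(τ^β < T) = x - E[X_T]`; in particular the limit is at most `x`. -/
theorem stmt0 {Ω : Type*} {m : MeasurableSpace Ω} (ℱ : Filtration ℝ m)
    (P : Measure Ω) [IsProbabilityMeasure P]
    (X : ℝ → Ω → ℝ) (x T : ℝ) (hx : 0 ≤ x) (hT : 0 < T)
    (hX0 : ∀ ω, X 0 ω = x)
    (hcont : ∀ ω, Continuous fun s => X s ω)
    (hnonneg : ∀ s ω, 0 ≤ X s ω)
    (hloc : IsLocMart ℱ X P)
    (hsup : Supermartingale X ℱ P) :
    Tendsto (fun β : ℝ => β * (P {ω | hittingBtwn X (Ici β) 0 T ω < T}).toReal)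
        atTop (𝓝 (x - ∫ ω, X T ω ∂P)) ∧
      x - ∫ ω, X T ω ∂P ≤ x :=
  stmt0_general ℱ P X x T hT hX0 hcont hnonneg hloc hsup
end

section
/- Let σ : (0,∞) → (0,∞) and define v(x) := ∫_{1/2}^x (x−y)·2/(σ(y/(1−y))²·(1−y)^4) dy for x ∈ (1/2, 1]. Then ∫_1^∞ x/σ(x)^2 dx ≤ (1/2)·v(1) ≤ 2·∫_1^∞ x/σ(x)^2 dx, where v(1) is interpreted as an extended real. In particular v(1) = ∞ if and only if ∫_1^∞ x/σ(x)^2 dx = ∞. -/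
open MeasureTheory Set
open scoped ENNReal

/-! The substitution `x = y / (1 - y)` maps `(1/2, 1)` onto `(1, ∞)`, with `dx = (1 - y)⁻² dy` and
`1 + x = (1 - y)⁻¹`; it turns `v(1)` into `2 ∫_1^∞ (1 + x) / σ(x)² dx`, and the bounds follow from
`x ≤ 1 + x ≤ 2x` on `(1, ∞)`. -/

theorem hasDerivAt_div_one_sub {y : ℝ} (hy : y ≠ 1) :
    HasDerivAt (fun y : ℝ => y / (1 - y)) ((1 - y) ^ 2)⁻¹ y := by
  have hy' : 1 - y ≠ 0 := sub_ne_zero.mpr hy.symm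
  refine ((hasDerivAt_id' y).div ((hasDerivAt_id' y).const_sub 1) hy').congr_deriv ?_
  field_simp
  ring

theorem injOn_div_one_sub : InjOn (fun y : ℝ => y / (1 - y)) (Iio 1) := by
  intro a ha b hb hab
  have ha' : 1 - a ≠ 0 := by linarith [mem_Iio.mp ha]
  have hb' : 1 - b ≠ 0 := by linarith [mem_Iio.mp hb]
  field_simp at hab
  linarith

theorem image_div_one_sub_Ioo {a : ℝ} (ha : a < 1) :
    (fun y : ℝ => y / (1 - y)) '' Ioo a 1 = Ioi (a / (1 - a)) := by
  have ha' : 0 < 1 - a := by linarith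
  ext x
  constructor
  · rintro ⟨y, ⟨hay, hy1⟩, rfl⟩
    have hy' : 0 < 1 - y := by linarith
    rw [mem_Ioi, div_lt_div_iff₀ ha' hy']
    nlinarith
  · intro hx
    rw [mem_Ioi, div_lt_iff₀ ha'] at hx
    have hx1 : 0 < 1 + x := by nlinarith
    refine ⟨x / (1 + x), ⟨?_, ?_⟩, ?_⟩
    · rw [lt_div_iff₀ hx1]; linarith
    · rw [div_lt_one hx1]; linarith
    · field_simp; ring

theorem lintegral_Ioi_div_one_sub_eq {a : ℝ} (ha : a < 1) (f : ℝ → ℝ≥0∞) :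
    ∫⁻ x in Ioi (a / (1 - a)), f x =
      ∫⁻ y in Ioo a 1, ENNReal.ofReal ((1 - y) ^ 2)⁻¹ * f (y / (1 - y)) := by
  rw [← image_div_one_sub_Ioo ha, lintegral_image_eq_lintegral_abs_deriv_mul measurableSet_Ioo
    (fun y hy => (hasDerivAt_div_one_sub hy.2.ne).hasDerivWithinAt)
    (injOn_div_one_sub.mono fun y hy => hy.2)]
  simp_rw [abs_inv, abs_pow, sq_abs]

theorem ofReal_feller_integrand_eq {y : ℝ} (hy : y < 1) (s : ℝ) :
    ENNReal.ofReal ((1 - y) * 2 / (s * (1 - y) ^ 4)) =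
      2 * (ENNReal.ofReal ((1 - y) ^ 2)⁻¹ * ENNReal.ofReal ((1 + y / (1 - y)) / s)) := by
  have hy' : 1 - y ≠ 0 := by linarith
  rw [← ENNReal.ofReal_mul (by positivity), ← ENNReal.ofReal_ofNat 2,
    ← ENNReal.ofReal_mul zero_le_two]
  congr 1
  rcases eq_or_ne s 0 with rfl | hs
  · simp
  · field_simp
    ring

theorem lintegral_feller_eq (σ : ℝ → ℝ) :
    ∫⁻ y in Ioo (1/2 : ℝ) 1,
        ENNReal.ofReal ((1 - y) * 2 / (σ (y / (1 - y)) ^ 2 * (1 - y) ^ 4)) =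
      2 * ∫⁻ x in Ioi (1 : ℝ), ENNReal.ofReal ((1 + x) / σ x ^ 2) := by
  have hcov := lintegral_Ioi_div_one_sub_eq (a := 1/2) (by norm_num)
    fun x => ENNReal.ofReal ((1 + x) / σ x ^ 2)
  rw [show (1/2 : ℝ) / (1 - 1/2) = 1 by norm_num] at hcov
  rw [hcov, ← lintegral_const_mul' 2 _ ENNReal.ofNat_ne_top]
  exact setLIntegral_congr_fun measurableSet_Ioo fun y hy => ofReal_feller_integrand_eq hy.2 _

theorem lintegral_div_sq_le_lintegral_one_add_div_sq (σ : ℝ → ℝ) :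
    ∫⁻ x in Ioi (1 : ℝ), ENNReal.ofReal (x / σ x ^ 2) ≤
      ∫⁻ x in Ioi (1 : ℝ), ENNReal.ofReal ((1 + x) / σ x ^ 2) :=
  setLIntegral_mono' measurableSet_Ioi fun x _ =>
    ENNReal.ofReal_le_ofReal (div_le_div_of_nonneg_right (by linarith) (sq_nonneg _))

theorem lintegral_one_add_div_sq_le_two_mul_lintegral_div_sq (σ : ℝ → ℝ) :
    ∫⁻ x in Ioi (1 : ℝ), ENNReal.ofReal ((1 + x) / σ x ^ 2) ≤
      2 * ∫⁻ x in Ioi (1 : ℝ), ENNReal.ofReal (x / σ x ^ 2) := by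
  rw [← lintegral_const_mul' 2 _ ENNReal.ofNat_ne_top]
  refine setLIntegral_mono' measurableSet_Ioi fun x hx => ?_
  rw [← ENNReal.ofReal_ofNat 2, ← ENNReal.ofReal_mul zero_le_two, ← mul_div_assoc]
  exact ENNReal.ofReal_le_ofReal
    (div_le_div_of_nonneg_right (by linarith [mem_Ioi.mp hx]) (sq_nonneg _))

theorem stmt5_general (σ : ℝ → ℝ) :
    (∫⁻ x in Ioi (1:ℝ), ENNReal.ofReal (x / σ x ^ 2)) ≤
      (1/2) * ∫⁻ y in Ioo (1/2 : ℝ) 1,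
        ENNReal.ofReal ((1 - y) * 2 / (σ (y / (1 - y)) ^ 2 * (1 - y) ^ 4)) ∧
    (1/2) * (∫⁻ y in Ioo (1/2 : ℝ) 1,
        ENNReal.ofReal ((1 - y) * 2 / (σ (y / (1 - y)) ^ 2 * (1 - y) ^ 4))) ≤
      2 * ∫⁻ x in Ioi (1:ℝ), ENNReal.ofReal (x / σ x ^ 2) ∧
    ((∫⁻ y in Ioo (1/2 : ℝ) 1,
        ENNReal.ofReal ((1 - y) * 2 / (σ (y / (1 - y)) ^ 2 * (1 - y) ^ 4))) = ⊤ ↔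
      (∫⁻ x in Ioi (1:ℝ), ENNReal.ofReal (x / σ x ^ 2)) = ⊤) := by
  have hA_le_B := lintegral_div_sq_le_lintegral_one_add_div_sq σ
  have hB_le_two_mul_A := lintegral_one_add_div_sq_le_two_mul_lintegral_div_sq σ
  have two_mul_eq_top : ∀ c : ℝ≥0∞, 2 * c = ⊤ ↔ c = ⊤ := fun c => by simp [ENNReal.mul_eq_top]
  rw [lintegral_feller_eq, ← mul_assoc, one_div,
    ENNReal.inv_mul_cancel two_ne_zero ENNReal.ofNat_ne_top, one_mul, two_mul_eq_top]
  exact ⟨hA_le_B, hB_le_two_mul_A, fun h => (two_mul_eq_top _).mp (top_le_iff.mp (h ▸ hB_le_two_mul_A)),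
    fun h => top_le_iff.mp (h ▸ hA_le_B)⟩

/-- Comparison between the Feller test quantity
`v(1) = ∫_{1/2}^1 (1-y)·2/(σ(y/(1-y))²(1-y)⁴) dy` and `∫_1^∞ x/σ(x)² dx`
(as extended reals): `∫ ≤ v(1)/2 ≤ 2∫`; in particular `v(1) = ∞ ↔ ∫ = ∞`. -/
theorem stmt5 (σ : ℝ → ℝ) (hσ : ∀ x > (0:ℝ), 0 < σ x) (hmeas : Measurable σ) :
    (∫⁻ x in Ioi (1:ℝ), ENNReal.ofReal (x / σ x ^ 2)) ≤
      (1/2) * ∫⁻ y in Ioo (1/2 : ℝ) 1,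
        ENNReal.ofReal ((1 - y) * 2 / (σ (y / (1 - y)) ^ 2 * (1 - y) ^ 4)) ∧
    (1/2) * (∫⁻ y in Ioo (1/2 : ℝ) 1,
        ENNReal.ofReal ((1 - y) * 2 / (σ (y / (1 - y)) ^ 2 * (1 - y) ^ 4))) ≤
      2 * ∫⁻ x in Ioi (1:ℝ), ENNReal.ofReal (x / σ x ^ 2) ∧
    ((∫⁻ y in Ioo (1/2 : ℝ) 1,
        ENNReal.ofReal ((1 - y) * 2 / (σ (y / (1 - y)) ^ 2 * (1 - y) ^ 4))) = ⊤ ↔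
      (∫⁻ x in Ioi (1:ℝ), ENNReal.ofReal (x / σ x ^ 2)) = ⊤) :=
  stmt5_general σ
end

section
/- Let σ be continuous on (0,∞) with ∫_1^∞ x/σ(x)² dx = ∞ and 1/σ² locally integrable. Let u, v : [0,T] × [0,∞) → ℝ be C^{1,2} on [0,T) × (0,∞) with |u(t,x)| ≤ K(1+x) and |v(t,x)| ≤ K(1+x), such that −∂_t u − (1/2)σ(x)²∂_{xx}u ≤ 0 and −∂_t v − (1/2)σ(x)²∂_{xx}v ≥ 0 on [0,T) × (0,∞). If u(T,x) ≤ v(T,x) for all x > 0 and u(t,0) ≤ v(t,0) for all t ∈ [0,T], then u ≤ v on [0,T] × [0,∞). -/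
/-!
The difference `w = u - v` satisfies `∂ₜw + ½σ²∂ₓₓw ≥ 0`. Let `g` be the convex function with
`g(0) = g'(0) = 1` and `g'' = 2 (x - 1)⁺ / σ²`. Then `½σ²g'' ≤ (x - 1)⁺ < g`, so
`e^{T-t} g(x)` is a strict supersolution, and the divergence of `∫ x / σ²` forces `g' → ∞`,
i.e. `g` grows superlinearly. For `ε > 0` the function `w - ε e^{T-t} g` is therefore a strict
subsolution which, by the linear growth of `w`, is `≤ 0` on the parabolic boundary of
`[0, T] × [0, R]` for `R` large; an interior maximum is impossible, so `w ≤ ε e^{T-t} g`, and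
`ε → 0` gives `w ≤ 0`.
-/

open MeasureTheory Set Filter Topology

lemma HasDerivAt.nonpos_of_le_right {f : ℝ → ℝ} {f' a b : ℝ} (hf : HasDerivAt f f' a)
    (hab : a < b) (hmax : ∀ t ∈ Ioo a b, f t ≤ f a) : f' ≤ 0 := by
  refine le_of_tendsto (hf.tendsto_slope.mono_left (nhdsGT_le_nhdsNE a)) ?_
  filter_upwards [Ioo_mem_nhdsGT hab] with t ht
  rw [slope_def_field]
  exact div_nonpos_of_nonpos_of_nonneg (sub_nonpos.mpr (hmax t ht)) (sub_pos.mpr ht.1).le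

lemma IsLocalMax.hasDerivAt_deriv_nonpos {f f' : ℝ → ℝ} {a c : ℝ} (h : IsLocalMax f a)
    (hf : ∀ᶠ x in 𝓝 a, HasDerivAt f (f' x) x) (hf' : HasDerivAt f' c a) : c ≤ 0 := by
  by_contra! hc
  have hderiv : deriv f =ᶠ[𝓝 a] f' := hf.mono fun x hx => hx.deriv
  have hmin : IsLocalMin f a :=
    isLocalMin_of_deriv_deriv_pos (by rwa [hderiv.deriv_eq, hf'.deriv])
      (by rw [hderiv.self_of_nhds]; exact h.hasDerivAt_eq_zero hf.self_of_nhds)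
      hf.self_of_nhds.continuousAt
  have hconst : ∀ᶠ x in 𝓝 a, f' x = 0 := by
    filter_upwards [(h.and hmin).eventually_nhds, hf] with x hx hfx
    exact hfx.unique ((hasDerivAt_const x (f a)).congr_of_eventuallyEq
      (hx.mono fun y hy => le_antisymm hy.1 hy.2))
  exact hc.ne' (hf'.unique ((hasDerivAt_const a 0).congr_of_eventuallyEq hconst))

lemma tendsto_intervalIntegral_atTop_of_lintegral_eq_top {f : ℝ → ℝ} {a : ℝ}
    (hfc : ContinuousOn f (Ici a)) (hf : ∀ x ≥ a, 0 ≤ f x)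
    (htop : ∫⁻ x in Ioi a, ENNReal.ofReal (f x) = ⊤) :
    Tendsto (fun b => ∫ x in a..b, f x) atTop atTop := by
  rw [← ENNReal.tendsto_ofReal_nhds_top, ← htop]
  have hcover : AECover (volume.restrict (Ioi a)) atTop fun b => Iic b := aecover_Iic tendsto_id
  refine (hcover.lintegral_tendsto_of_countably_generated
    ((hfc.mono Ioi_subset_Ici_self).aemeasurable measurableSet_Ioi).ennreal_ofReal).congr' ?_
  filter_upwards [eventually_ge_atTop a] with b hab
  rw [Measure.restrict_restrict measurableSet_Iic, Iic_inter_Ioi,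
    intervalIntegral.integral_of_le hab,
    ofReal_integral_eq_lintegral_ofReal
      ((hfc.mono Icc_subset_Ici_self).integrableOn_Icc.mono_set Ioc_subset_Icc_self)]
  filter_upwards [ae_restrict_mem measurableSet_Ioc] with x hx using hf x hx.1.le

theorem nonpos_of_strict_backward_parabolic {T R : ℝ} {a : ℝ → ℝ} {w wt wx wxx : ℝ → ℝ → ℝ}
    (hcont : ContinuousOn (fun p : ℝ × ℝ => w p.1 p.2) (Icc 0 T ×ˢ Icc 0 R))
    (hwt : ∀ t x, t ∈ Ico 0 T → x ∈ Ioo 0 R → HasDerivAt (fun s => w s x) (wt t x) t)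
    (hwx : ∀ t x, t ∈ Ico 0 T → x ∈ Ioo 0 R → HasDerivAt (w t) (wx t x) x)
    (hwxx : ∀ t x, t ∈ Ico 0 T → x ∈ Ioo 0 R → HasDerivAt (wx t) (wxx t x) x)
    (ha : ∀ x ∈ Ioo 0 R, 0 ≤ a x)
    (hstrict : ∀ t x, t ∈ Ico 0 T → x ∈ Ioo 0 R → 0 < wt t x + a x * wxx t x)
    (hterm : ∀ x ∈ Ioc 0 R, w T x ≤ 0) (hleft : ∀ t ∈ Icc 0 T, w t 0 ≤ 0)
    (hright : ∀ t ∈ Icc 0 T, w t R ≤ 0) :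
    ∀ t ∈ Icc 0 T, ∀ x ∈ Icc 0 R, w t x ≤ 0 := by
  intro t ht x hx
  obtain ⟨⟨t₀, x₀⟩, ⟨ht₀, hx₀⟩, hmax⟩ :=
    (isCompact_Icc.prod isCompact_Icc).exists_isMaxOn ⟨(t, x), ht, hx⟩ hcont
  have hmax' : ∀ s ∈ Icc 0 T, ∀ y ∈ Icc 0 R, w s y ≤ w t₀ x₀ := fun s hs y hy =>
    hmax (mk_mem_prod hs hy)
  refine (hmax' t ht x hx).trans ?_
  rcases hx₀.1.eq_or_lt with rfl | hx₀0
  · exact hleft t₀ ht₀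
  rcases hx₀.2.eq_or_lt with rfl | hx₀R
  · exact hright t₀ ht₀
  rcases ht₀.2.eq_or_lt with rfl | ht₀T
  · exact hterm x₀ ⟨hx₀0, hx₀.2⟩
  exfalso
  have hx₀' : x₀ ∈ Ioo 0 R := ⟨hx₀0, hx₀R⟩
  have ht₀' : t₀ ∈ Ico 0 T := ⟨ht₀.1, ht₀T⟩
  have hwt₀ : wt t₀ x₀ ≤ 0 := (hwt t₀ x₀ ht₀' hx₀').nonpos_of_le_right ht₀T
    fun s hs => hmax' s ⟨ht₀.1.trans hs.1.le, hs.2.le⟩ x₀ hx₀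
  have hwxx₀ : wxx t₀ x₀ ≤ 0 := by
    refine IsLocalMax.hasDerivAt_deriv_nonpos (f := w t₀) ?_ ?_ (hwxx t₀ x₀ ht₀' hx₀')
    · filter_upwards [Icc_mem_nhds hx₀0 hx₀R] with y hy using hmax' t₀ ht₀ y hy
    · filter_upwards [Ioo_mem_nhds hx₀0 hx₀R] with y hy using hwx t₀ y ht₀' hy
  linarith [hstrict t₀ x₀ ht₀' hx₀', mul_nonpos_of_nonneg_of_nonpos (ha x₀ hx₀') hwxx₀]

-- Vanishes on `(-∞, 1]`, so `lyapunov σ` is `C²` on all of `ℝ` although `σ` is only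
-- controlled on `(0, ∞)`.
noncomputable def lyapunovCurvature (σ : ℝ → ℝ) (z : ℝ) : ℝ := 2 * max (z - 1) 0 / σ z ^ 2

noncomputable def lyapunovSlope (σ : ℝ → ℝ) (y : ℝ) : ℝ := 1 + ∫ z in 0..y, lyapunovCurvature σ z

noncomputable def lyapunov (σ : ℝ → ℝ) (x : ℝ) : ℝ := 1 + ∫ y in 0..x, lyapunovSlope σ y

section Lyapunov

variable {σ : ℝ → ℝ}

lemma lyapunovCurvature_nonneg (σ : ℝ → ℝ) (z : ℝ) : 0 ≤ lyapunovCurvature σ z := by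
  unfold lyapunovCurvature; positivity

lemma half_sq_mul_lyapunovCurvature_le (σ : ℝ → ℝ) (z : ℝ) :
    σ z ^ 2 / 2 * lyapunovCurvature σ z ≤ max (z - 1) 0 := by
  rcases eq_or_ne (σ z) 0 with h | h
  · simp [lyapunovCurvature, h]
  · rw [lyapunovCurvature]; field_simp; rfl

lemma one_le_lyapunovSlope (σ : ℝ → ℝ) {x : ℝ} (hx : 0 ≤ x) : 1 ≤ lyapunovSlope σ x :=
  le_add_of_nonneg_right <|
    intervalIntegral.integral_nonneg hx fun z _ => lyapunovCurvature_nonneg σ z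

lemma continuous_lyapunovCurvature (hσc : ContinuousOn σ (Ioi 0)) (hσpos : ∀ x > 0, 0 < σ x) :
    Continuous (lyapunovCurvature σ) := by
  rw [continuous_iff_continuousAt]
  intro z
  rcases lt_or_ge 0 z with hz | hz
  · exact ((continuousAt_const.mul ((continuous_sub_right 1).max continuous_const).continuousAt).div
      ((hσc.continuousAt (Ioi_mem_nhds hz)).pow 2) (pow_ne_zero 2 (hσpos z hz).ne'))
  · refine (continuousAt_const (y := (0:ℝ))).congr ?_
    filter_upwards [Iio_mem_nhds (hz.trans_lt one_pos)] with y hy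
    simp [lyapunovCurvature, max_eq_right (sub_nonpos.mpr (mem_Iio.mp hy).le)]

lemma hasDerivAt_lyapunovSlope (hσc : ContinuousOn σ (Ioi 0)) (hσpos : ∀ x > 0, 0 < σ x)
    (x : ℝ) : HasDerivAt (lyapunovSlope σ) (lyapunovCurvature σ x) x :=
  (((continuous_lyapunovCurvature hσc hσpos).integral_hasStrictDerivAt 0 x).hasDerivAt).const_add 1

lemma continuous_lyapunovSlope (hσc : ContinuousOn σ (Ioi 0)) (hσpos : ∀ x > 0, 0 < σ x) :
    Continuous (lyapunovSlope σ) :=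
  continuous_iff_continuousAt.2 fun x => (hasDerivAt_lyapunovSlope hσc hσpos x).continuousAt

lemma hasDerivAt_lyapunov (hσc : ContinuousOn σ (Ioi 0)) (hσpos : ∀ x > 0, 0 < σ x)
    (x : ℝ) : HasDerivAt (lyapunov σ) (lyapunovSlope σ x) x :=
  (((continuous_lyapunovSlope hσc hσpos).integral_hasStrictDerivAt 0 x).hasDerivAt).const_add 1

lemma continuous_lyapunov (hσc : ContinuousOn σ (Ioi 0)) (hσpos : ∀ x > 0, 0 < σ x) :
    Continuous (lyapunov σ) :=
  continuous_iff_continuousAt.2 fun x => (hasDerivAt_lyapunov hσc hσpos x).continuousAt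

lemma add_le_lyapunov (hσc : ContinuousOn σ (Ioi 0)) (hσpos : ∀ x > 0, 0 < σ x) {x : ℝ}
    (hx : 0 ≤ x) : 1 + x ≤ lyapunov σ x := by
  have h := intervalIntegral.integral_mono_on hx (intervalIntegrable_const (μ := volume))
    ((continuous_lyapunovSlope hσc hσpos).intervalIntegrable 0 x)
    fun y hy => one_le_lyapunovSlope σ hy.1
  simp only [intervalIntegral.integral_const, sub_zero, smul_eq_mul, mul_one] at h
  rw [lyapunov]
  linarith

lemma lyapunov_pos (hσc : ContinuousOn σ (Ioi 0)) (hσpos : ∀ x > 0, 0 < σ x) {x : ℝ}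
    (hx : 0 ≤ x) : 0 < lyapunov σ x :=
  (by linarith : (0:ℝ) < 1 + x).trans_le (add_le_lyapunov hσc hσpos hx)

lemma half_sq_mul_lyapunovCurvature_lt (hσc : ContinuousOn σ (Ioi 0))
    (hσpos : ∀ x > 0, 0 < σ x) {x : ℝ} (hx : 0 ≤ x) :
    σ x ^ 2 / 2 * lyapunovCurvature σ x < lyapunov σ x :=
  (half_sq_mul_lyapunovCurvature_le σ x).trans_lt <|
    (max_lt (by linarith) (by linarith)).trans_le (add_le_lyapunov hσc hσpos hx)

lemma tendsto_lyapunovSlope_atTop (hσc : ContinuousOn σ (Ioi 0)) (hσpos : ∀ x > 0, 0 < σ x)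
    (hdiv : ∫⁻ x in Ioi (1:ℝ), ENNReal.ofReal (x / σ x ^ 2) = ⊤) :
    Tendsto (lyapunovSlope σ) atTop atTop := by
  have hfc : ContinuousOn (fun x => x / σ x ^ 2) (Ici 1) :=
    continuousOn_id.div ((hσc.mono (Ici_subset_Ioi.mpr one_pos)).pow 2)
      fun x hx => pow_ne_zero 2 (hσpos x (one_pos.trans_le hx)).ne'
  have hint : ∀ a b : ℝ, 1 ≤ a → 1 ≤ b → IntervalIntegrable (fun x => x / σ x ^ 2) volume a b :=
    fun a b ha hb => (hfc.mono fun x hx => (le_inf ha hb).trans hx.1).intervalIntegrable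
  refine tendsto_atTop_mono' _ ?_ (tendsto_atTop_add_const_right _ (-∫ x in (1:ℝ)..2, x / σ x ^ 2)
    (tendsto_intervalIntegral_atTop_of_lintegral_eq_top hfc
      (fun x hx => div_nonneg (zero_le_one.trans hx) (sq_nonneg _)) hdiv))
  filter_upwards [eventually_ge_atTop 2] with b hb
  have hcurv : ∀ a b : ℝ, IntervalIntegrable (lyapunovCurvature σ) volume a b :=
    (continuous_lyapunovCurvature hσc hσpos).intervalIntegrable
  -- on `[2, b]` we have `x ≤ 2 (x - 1)`
  have hcomp : ∫ x in (2:ℝ)..b, x / σ x ^ 2 ≤ ∫ x in (2:ℝ)..b, lyapunovCurvature σ x :=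
    intervalIntegral.integral_mono_on hb (hint 2 b one_le_two (by linarith)) (hcurv 2 b)
      fun x hx => by
        rw [lyapunovCurvature, max_eq_left (by linarith [hx.1])]
        exact div_le_div_of_nonneg_right (by linarith [hx.1]) (sq_nonneg _)
  have hsplit := intervalIntegral.integral_add_adjacent_intervals (hcurv 0 2) (hcurv 2 b)
  have hnonneg : 0 ≤ ∫ x in (0:ℝ)..2, lyapunovCurvature σ x :=
    intervalIntegral.integral_nonneg zero_le_two fun z _ => lyapunovCurvature_nonneg σ z
  rw [← sub_eq_add_neg, intervalIntegral.integral_interval_sub_left (hint 1 b le_rfl (by linarith))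
    (hint 1 2 le_rfl one_le_two), lyapunovSlope]
  linarith

lemma eventually_mul_one_add_le_lyapunov (hσc : ContinuousOn σ (Ioi 0))
    (hσpos : ∀ x > 0, 0 < σ x) (hdiv : ∫⁻ x in Ioi (1:ℝ), ENNReal.ofReal (x / σ x ^ 2) = ⊤)
    (C : ℝ) : ∀ᶠ x in atTop, C * (1 + x) ≤ lyapunov σ x := by
  obtain ⟨X, hX⟩ := eventually_atTop.1 <|
    (tendsto_atTop.1 (tendsto_lyapunovSlope_atTop hσc hσpos hdiv) (C + 1)).and
      (eventually_ge_atTop 0)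
  have hX0 : 0 ≤ X := (hX X le_rfl).2
  filter_upwards [eventually_ge_atTop (max X (C * (1 + X)))] with x hx
  have hXx : X ≤ x := le_of_max_le_left hx
  have hslope : ∀ a b : ℝ, IntervalIntegrable (lyapunovSlope σ) volume a b :=
    (continuous_lyapunovSlope hσc hσpos).intervalIntegrable
  have hleft := intervalIntegral.integral_mono_on hX0 (intervalIntegrable_const (μ := volume))
    (hslope 0 X) fun y hy => one_le_lyapunovSlope σ hy.1
  have hright := intervalIntegral.integral_mono_on hXx (intervalIntegrable_const (μ := volume))
    (hslope X x) fun y hy => (hX y hy.1).1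
  simp only [intervalIntegral.integral_const, smul_eq_mul, mul_one, sub_zero] at hleft hright
  rw [lyapunov, ← intervalIntegral.integral_add_adjacent_intervals (hslope 0 X) (hslope X x)]
  linarith [le_of_max_le_right hx]

end Lyapunov

theorem le_lyapunov_of_backward_subsolution {σ : ℝ → ℝ} (hσc : ContinuousOn σ (Ioi 0))
    (hσpos : ∀ x > 0, 0 < σ x) {T R ε : ℝ} {w wt wx wxx : ℝ → ℝ → ℝ}
    (hcont : ContinuousOn (fun p : ℝ × ℝ => w p.1 p.2) (Icc 0 T ×ˢ Ici 0))
    (hwt : ∀ t x, t ∈ Ico 0 T → 0 < x → HasDerivAt (fun s => w s x) (wt t x) t)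
    (hwx : ∀ t x, t ∈ Ico 0 T → 0 < x → HasDerivAt (w t) (wx t x) x)
    (hwxx : ∀ t x, t ∈ Ico 0 T → 0 < x → HasDerivAt (wx t) (wxx t x) x)
    (hsub : ∀ t x, t ∈ Ico 0 T → 0 < x → 0 ≤ wt t x + σ x ^ 2 / 2 * wxx t x)
    (hterm : ∀ x > 0, w T x ≤ 0) (hbdry : ∀ t ∈ Icc 0 T, w t 0 ≤ 0)
    (hε : 0 < ε) (hR0 : 0 ≤ R) (hR : ∀ t ∈ Icc 0 T, w t R ≤ ε * lyapunov σ R) :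
    ∀ t ∈ Icc 0 T, ∀ x ∈ Icc 0 R, w t x ≤ ε * (Real.exp (T - t) * lyapunov σ x) := by
  have hexp (s : ℝ) : HasDerivAt (fun s => Real.exp (T - s)) (-Real.exp (T - s)) s := by
    simpa using ((hasDerivAt_id s).const_sub T).exp
  have hbarrier {s y : ℝ} (hs : s ≤ T) (hy : 0 ≤ y) :
      ε * lyapunov σ y ≤ ε * (Real.exp (T - s) * lyapunov σ y) := by
    gcongr
    exact le_mul_of_one_le_left (lyapunov_pos hσc hσpos hy).le (Real.one_le_exp (sub_nonneg.2 hs))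
  simpa only [sub_nonpos] using nonpos_of_strict_backward_parabolic
    (w := fun s y => w s y - ε * (Real.exp (T - s) * lyapunov σ y))
    (wt := fun s y => wt s y + ε * (Real.exp (T - s) * lyapunov σ y))
    (wx := fun s y => wx s y - ε * (Real.exp (T - s) * lyapunovSlope σ y))
    (wxx := fun s y => wxx s y - ε * (Real.exp (T - s) * lyapunovCurvature σ y))
    (a := fun y => σ y ^ 2 / 2)
    ((hcont.mono (prod_mono_right Icc_subset_Ici_self)).sub
      (by have := continuous_lyapunov hσc hσpos; fun_prop))
    (fun s y hs hy => ((hwt s y hs hy.1).sub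
      (((hexp s).mul_const (lyapunov σ y)).const_mul ε)).congr_deriv (by ring))
    (fun s y hs hy => (hwx s y hs hy.1).sub
      (((hasDerivAt_lyapunov hσc hσpos y).const_mul _).const_mul ε))
    (fun s y hs hy => (hwxx s y hs hy.1).sub
      (((hasDerivAt_lyapunovSlope hσc hσpos y).const_mul _).const_mul ε))
    (fun y _ => by positivity)
    (fun s y hs hy => by
      have hlt := half_sq_mul_lyapunovCurvature_lt hσc hσpos hy.1.le
      have hpos : 0 < ε * Real.exp (T - s) := by positivity
      linarith [hsub s y hs hy.1, mul_lt_mul_of_pos_left hlt hpos])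
    (fun y hy => by
      linarith [hterm y hy.1, hbarrier le_rfl hy.1.le, mul_pos hε (lyapunov_pos hσc hσpos hy.1.le)])
    (fun s hs => by
      linarith [hbdry s hs, hbarrier hs.2 le_rfl, mul_pos hε (lyapunov_pos hσc hσpos le_rfl)])
    (fun s hs => by linarith [hR s hs, hbarrier hs.2 hR0])

theorem nonpos_of_backward_subsolution {σ : ℝ → ℝ} (hσc : ContinuousOn σ (Ioi 0))
    (hσpos : ∀ x > 0, 0 < σ x) (hdiv : ∫⁻ x in Ioi (1:ℝ), ENNReal.ofReal (x / σ x ^ 2) = ⊤)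
    {T K : ℝ} {w wt wx wxx : ℝ → ℝ → ℝ}
    (hcont : ContinuousOn (fun p : ℝ × ℝ => w p.1 p.2) (Icc 0 T ×ˢ Ici 0))
    (hwt : ∀ t x, t ∈ Ico 0 T → 0 < x → HasDerivAt (fun s => w s x) (wt t x) t)
    (hwx : ∀ t x, t ∈ Ico 0 T → 0 < x → HasDerivAt (w t) (wx t x) x)
    (hwxx : ∀ t x, t ∈ Ico 0 T → 0 < x → HasDerivAt (wx t) (wxx t x) x)
    (hsub : ∀ t x, t ∈ Ico 0 T → 0 < x → 0 ≤ wt t x + σ x ^ 2 / 2 * wxx t x)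
    (hgrowth : ∀ t x, t ∈ Icc 0 T → 0 ≤ x → w t x ≤ K * (1 + x))
    (hterm : ∀ x > 0, w T x ≤ 0) (hbdry : ∀ t ∈ Icc 0 T, w t 0 ≤ 0) :
    ∀ t ∈ Icc 0 T, ∀ x ∈ Ici 0, w t x ≤ 0 := by
  intro t ht x hx
  have hle : ∀ ε > 0, w t x ≤ ε * (Real.exp (T - t) * lyapunov σ x) := by
    intro ε hε
    obtain ⟨R, hR, hxR⟩ := ((eventually_mul_one_add_le_lyapunov hσc hσpos hdiv (K / ε)).and
      (eventually_ge_atTop x)).exists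
    refine le_lyapunov_of_backward_subsolution hσc hσpos hcont hwt hwx hwxx hsub hterm hbdry hε
      (hx.trans hxR) (fun s hs => ?_) t ht x ⟨hx, hxR⟩
    calc w s R ≤ K * (1 + R) := hgrowth s R hs (hx.trans hxR)
      _ = ε * (K / ε * (1 + R)) := by field_simp
      _ ≤ ε * lyapunov σ R := by gcongr
  refine ge_of_tendsto (x := 𝓝[>] 0) ?_ (eventually_nhdsWithin_of_forall hle)
  exact ((continuous_mul_const _).tendsto' 0 0 (zero_mul _)).mono_left nhdsWithin_le_nhds

theorem stmt7_general (σ : ℝ → ℝ) (hσc : ContinuousOn σ (Ioi 0))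
    (hσpos : ∀ x > (0:ℝ), 0 < σ x)
    (hdiv : ∫⁻ x in Ioi (1:ℝ), ENNReal.ofReal (x / σ x ^ 2) = ⊤)
    (T K : ℝ)
    (u v : ℝ → ℝ → ℝ)
    (ut ux uxx vt vx vxx : ℝ → ℝ → ℝ)
    (hucont : ContinuousOn (fun p : ℝ × ℝ => u p.1 p.2) (Icc 0 T ×ˢ Ici 0))
    (hvcont : ContinuousOn (fun p : ℝ × ℝ => v p.1 p.2) (Icc 0 T ×ˢ Ici 0))
    (hut : ∀ t x : ℝ, t ∈ Ico 0 T → 0 < x → HasDerivAt (fun s => u s x) (ut t x) t)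
    (hux : ∀ t x : ℝ, t ∈ Ico 0 T → 0 < x → HasDerivAt (fun y => u t y) (ux t x) x)
    (huxx : ∀ t x : ℝ, t ∈ Ico 0 T → 0 < x → HasDerivAt (fun y => ux t y) (uxx t x) x)
    (hvt : ∀ t x : ℝ, t ∈ Ico 0 T → 0 < x → HasDerivAt (fun s => v s x) (vt t x) t)
    (hvx : ∀ t x : ℝ, t ∈ Ico 0 T → 0 < x → HasDerivAt (fun y => v t y) (vx t x) x)
    (hvxx : ∀ t x : ℝ, t ∈ Ico 0 T → 0 < x → HasDerivAt (fun y => vx t y) (vxx t x) x)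
    (hugrow : ∀ t x : ℝ, t ∈ Icc 0 T → 0 ≤ x → |u t x| ≤ K * (1 + x))
    (hvgrow : ∀ t x : ℝ, t ∈ Icc 0 T → 0 ≤ x → |v t x| ≤ K * (1 + x))
    (husub : ∀ t x : ℝ, t ∈ Ico 0 T → 0 < x →
      -(ut t x) - (1/2) * σ x ^ 2 * uxx t x ≤ 0)
    (hvsup : ∀ t x : ℝ, t ∈ Ico 0 T → 0 < x →
      0 ≤ -(vt t x) - (1/2) * σ x ^ 2 * vxx t x)
    (hterm : ∀ x > (0:ℝ), u T x ≤ v T x)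
    (hbdry : ∀ t ∈ Icc (0:ℝ) T, u t 0 ≤ v t 0) :
    ∀ t ∈ Icc (0:ℝ) T, ∀ x ∈ Ici (0:ℝ), u t x ≤ v t x := by
  have hdiff := nonpos_of_backward_subsolution hσc hσpos hdiv (K := 2 * K)
    (w := fun t x => u t x - v t x) (wt := fun t x => ut t x - vt t x)
    (wx := fun t x => ux t x - vx t x) (wxx := fun t x => uxx t x - vxx t x)
    (hucont.sub hvcont)
    (fun t x ht hx => (hut t x ht hx).sub (hvt t x ht hx))
    (fun t x ht hx => (hux t x ht hx).sub (hvx t x ht hx))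
    (fun t x ht hx => (huxx t x ht hx).sub (hvxx t x ht hx))
    (fun t x ht hx => by linarith [husub t x ht hx, hvsup t x ht hx])
    (fun t x ht hx => by
      linarith [le_abs_self (u t x), neg_abs_le (v t x), hugrow t x ht hx, hvgrow t x ht hx])
    (fun x hx => sub_nonpos.2 (hterm x hx)) (fun t ht => sub_nonpos.2 (hbdry t ht))
  exact fun t ht x hx => sub_nonpos.1 (hdiff t ht x hx)

/-- Comparison theorem without linear growth of `σ`. Let `σ` be continuous
and positive on `(0,∞)` with `∫_1^∞ x/σ(x)² dx = ∞` and `1/σ²` locally integrable.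
If `u` (resp. `v`) is a classical subsolution (resp. supersolution) of
`-∂_t w - (1/2)σ²∂_{xx}w = 0` on `[0,T) × (0,∞)`, both continuous on `[0,T] × [0,∞)`
and of linear growth `≤ K(1+x)`, with `u ≤ v` at the terminal time and at the boundary
`x = 0`, then `u ≤ v` everywhere on `[0,T] × [0,∞)`. -/
theorem stmt7 (σ : ℝ → ℝ) (hσc : ContinuousOn σ (Ioi 0))
    (hσpos : ∀ x > (0:ℝ), 0 < σ x)
    (hdiv : ∫⁻ x in Ioi (1:ℝ), ENNReal.ofReal (x / σ x ^ 2) = ⊤)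
    (hloc : LocallyIntegrableOn (fun u => 1 / σ u ^ 2) (Ioi 0))
    (T K : ℝ) (hT : 0 < T)
    (u v : ℝ → ℝ → ℝ)
    (ut ux uxx vt vx vxx : ℝ → ℝ → ℝ)
    (hucont : ContinuousOn (fun p : ℝ × ℝ => u p.1 p.2) (Icc 0 T ×ˢ Ici 0))
    (hvcont : ContinuousOn (fun p : ℝ × ℝ => v p.1 p.2) (Icc 0 T ×ˢ Ici 0))
    (hut : ∀ t x : ℝ, t ∈ Ico 0 T → 0 < x → HasDerivAt (fun s => u s x) (ut t x) t)
    (hux : ∀ t x : ℝ, t ∈ Ico 0 T → 0 < x → HasDerivAt (fun y => u t y) (ux t x) x)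
    (huxx : ∀ t x : ℝ, t ∈ Ico 0 T → 0 < x → HasDerivAt (fun y => ux t y) (uxx t x) x)
    (hvt : ∀ t x : ℝ, t ∈ Ico 0 T → 0 < x → HasDerivAt (fun s => v s x) (vt t x) t)
    (hvx : ∀ t x : ℝ, t ∈ Ico 0 T → 0 < x → HasDerivAt (fun y => v t y) (vx t x) x)
    (hvxx : ∀ t x : ℝ, t ∈ Ico 0 T → 0 < x → HasDerivAt (fun y => vx t y) (vxx t x) x)
    (hugrow : ∀ t x : ℝ, t ∈ Icc 0 T → 0 ≤ x → |u t x| ≤ K * (1 + x))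
    (hvgrow : ∀ t x : ℝ, t ∈ Icc 0 T → 0 ≤ x → |v t x| ≤ K * (1 + x))
    (husub : ∀ t x : ℝ, t ∈ Ico 0 T → 0 < x →
      -(ut t x) - (1/2) * σ x ^ 2 * uxx t x ≤ 0)
    (hvsup : ∀ t x : ℝ, t ∈ Ico 0 T → 0 < x →
      0 ≤ -(vt t x) - (1/2) * σ x ^ 2 * vxx t x)
    (hterm : ∀ x > (0:ℝ), u T x ≤ v T x)
    (hbdry : ∀ t ∈ Icc (0:ℝ) T, u t 0 ≤ v t 0) :
    ∀ t ∈ Icc (0:ℝ) T, ∀ x ∈ Ici (0:ℝ), u t x ≤ v t x :=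
  stmt7_general σ hσc hσpos hdiv T K u v ut ux uxx vt vx vxx hucont hvcont hut hux huxx hvt hvx hvxx
    hugrow hvgrow husub hvsup hterm hbdry
end

section
/- Let X be a nonnegative continuous local martingale on [0,T] with X_0 = x > 0, and suppose X is a strict local martingale: E[X_T] < x. Let Y := X/(1+X) and τ := inf{s ≥ 0 : Y_s ∉ (0,1)} ∧ T. Suppose Q is a probability measure such that Y is a Q-martingale and dP = ((1−Y_T)/(1−y)) dQ with y = x/(1+x). Then Q(Y_τ = 1) > 0. -/
open MeasureTheory Filter Set
open scoped Topology

/-!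
Under `Q` the bounded continuous martingale `Y` can be sampled at the exit time `τ`, so
`E_Q[Y_τ] = E_Q[Y_T] = y`, the last equality being the normalisation of the density
`(1 - Y_T) / (1 - y)`. Since `X_T = Y_T / (1 - Y_T)` `P`-a.s., changing measure gives
`E_P[X_T] = E_Q[Y_T; Y_T ≠ 1] / (1 - y)`. Off the event `{Y_τ = 1}` the path is stopped either
at `0` or at time `T` with `Y_T < 1`, so there `Y_τ ≤ Y_T 1_{Y_T ≠ 1}`. If `Q(Y_τ = 1) = 0`, this
gives `y ≤ (1 - y) E_P[X_T] < (1 - y) x = y`.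
-/

section HittingTime

variable {Ω β : Type*} {u : ℝ → Ω → β} {s : Set β} {a b : ℝ} {ω : Ω}

theorem hittingBtwn_mem_of_isClosed [TopologicalSpace β] (hs : IsClosed s)
    (hu : Continuous fun t => u t ω) (h : ∃ j ∈ Icc a b, u j ω ∈ s) :
    u (hittingBtwn u s a b ω) ω ∈ s := by
  rw [hittingBtwn, if_pos h]
  obtain ⟨j, hj, hjs⟩ := h
  exact ((isClosed_Icc.inter (hs.preimage hu)).csInf_mem ⟨j, hj, hjs⟩
    bddBelow_Icc.inter_of_left).2

theorem hittingBtwn_mem_or_eq_right [TopologicalSpace β] (hs : IsClosed s)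
    (hu : Continuous fun t => u t ω) :
    u (hittingBtwn u s a b ω) ω ∈ s ∨ hittingBtwn u s a b ω = b := by
  by_cases h : ∃ j ∈ Icc a b, u j ω ∈ s
  · exact Or.inl (hittingBtwn_mem_of_isClosed hs hu h)
  · exact Or.inr (by rw [hittingBtwn, if_neg h])

theorem hittingBtwn_le_iff_of_isClosed [TopologicalSpace β] (hs : IsClosed s)
    (hu : Continuous fun t => u t ω) {t : ℝ} (htb : t < b) :
    hittingBtwn u s a b ω ≤ t ↔ ∃ j ∈ Icc a t, u j ω ∈ s := by
  constructor
  · intro hle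
    by_cases h : ∃ j ∈ Icc a b, u j ω ∈ s
    · exact ⟨_, ⟨le_hittingBtwn_of_exists h, hle⟩, hittingBtwn_mem_of_isClosed hs hu h⟩
    · rw [hittingBtwn, if_neg h] at hle
      exact absurd hle htb.not_ge
  · rintro ⟨j, ⟨haj, hjt⟩, hjs⟩
    exact (hittingBtwn_le_of_mem haj (hjt.trans htb.le) hjs).trans hjt

theorem exists_mem_isClosed_iff_forall_exists_infDist_lt [PseudoMetricSpace β]
    {f : ℝ → β} (hf : Continuous f) (hs : IsClosed s) (hs' : s.Nonempty) {K D : Set ℝ}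
    (hK : IsCompact K) (hDK : D ⊆ K) (hKD : K ⊆ closure D) :
    (∃ j ∈ K, f j ∈ s) ↔ ∀ n : ℕ, ∃ q ∈ D, Metric.infDist (f q) s < ((n : ℝ) + 1)⁻¹ := by
  have hg : Continuous fun t => Metric.infDist (f t) s :=
    (Metric.continuous_infDist_pt s).comp hf
  constructor
  · rintro ⟨j, hjK, hjs⟩ n
    have hj : j ∈ {t | Metric.infDist (f t) s < ((n : ℝ) + 1)⁻¹} := by
      simp only [mem_ofPred_eq, Metric.infDist_zero_of_mem hjs]
      positivity
    obtain ⟨q, hq, hqD⟩ := mem_closure_iff.mp (hKD hjK) _ (isOpen_lt hg continuous_const) hj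
    exact ⟨q, hqD, hq⟩
  · intro h
    choose q hqD hq using h
    obtain ⟨j, hjK, hjmin⟩ := hK.exists_isMinOn ⟨q 0, hDK (hqD 0)⟩ hg.continuousOn
    have hj0 : Metric.infDist (f j) s ≤ 0 := by
      refine ge_of_tendsto' tendsto_one_div_add_atTop_nhds_zero_nat fun n => ?_
      simpa [one_div] using (hjmin (hDK (hqD n))).trans (hq n).le
    exact ⟨j, hjK, (hs.mem_iff_infDist_zero hs').mpr (le_antisymm hj0 Metric.infDist_nonneg)⟩

/-- No right-continuity of `ℱ` is needed: for a closed set and continuous paths, `{τ ≤ t}` is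
decided by the values at countably many times in `[a, t]`. -/
theorem MeasureTheory.StronglyAdapted.isStoppingTime_hittingBtwn_of_continuous
    {mΩ : MeasurableSpace Ω} [PseudoMetricSpace β] [MeasurableSpace β] [BorelSpace β]
    {ℱ : Filtration ℝ mΩ} (hadp : StronglyAdapted ℱ u) (hu : ∀ ω, Continuous fun t => u t ω)
    (hs : IsClosed s) (hs' : s.Nonempty) :
    IsStoppingTime ℱ fun ω => ((hittingBtwn u s a b ω : ℝ) : WithTop ℝ) := by
  intro t
  simp only [WithTop.coe_le_coe]
  rcases le_or_gt b t with hbt | htb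
  · simp only [(hittingBtwn_le _).trans hbt, ofPred_true, MeasurableSet.univ]
  obtain ⟨D, hDsub, hDc, hDd⟩ :=
    (TopologicalSpace.IsSeparable.of_separableSpace (Icc a t)).exists_countable_dense_subset
  have hset : {ω | hittingBtwn u s a b ω ≤ t}
      = ⋂ n : ℕ, ⋃ q ∈ D, {ω | Metric.infDist (u q ω) s < ((n : ℝ) + 1)⁻¹} := by
    ext ω
    simp only [mem_ofPred_eq, mem_iInter, mem_iUnion, exists_prop,
      hittingBtwn_le_iff_of_isClosed hs (hu ω) htb]
    exact exists_mem_isClosed_iff_forall_exists_infDist_lt (hu ω) hs hs' isCompact_Icc hDsub hDd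
  rw [hset]
  refine .iInter fun n => .biUnion hDc fun q hq => measurableSet_lt ?_ measurable_const
  exact (Metric.continuous_infDist_pt s).measurable.comp
    ((hadp q).mono (ℱ.mono (hDsub hq).2)).measurable

theorem apply_hittingBtwn_compl_Ioo_le_of_ne_one {Y : ℝ → Ω → ℝ}
    (hY : ∀ t, Y t ω ∈ Icc (0 : ℝ) 1) (hYc : Continuous fun t => Y t ω)
    (h1 : Y (hittingBtwn Y (Ioo 0 1)ᶜ a b ω) ω ≠ 1) :
    Y (hittingBtwn Y (Ioo 0 1)ᶜ a b ω) ω ≤ {ω | Y b ω ≠ 1}.indicator (Y b) ω := by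
  rcases hittingBtwn_mem_or_eq_right isOpen_Ioo.isClosed_compl hYc with hτs | hτb
  · have h0 : Y (hittingBtwn Y (Ioo 0 1)ᶜ a b ω) ω = 0 := by
      obtain ⟨hY0, hY1⟩ := hY (hittingBtwn Y (Ioo 0 1)ᶜ a b ω)
      by_contra hne
      exact hτs ⟨lt_of_le_of_ne hY0 (Ne.symm hne), lt_of_le_of_ne hY1 h1⟩
    rw [h0]
    exact indicator_nonneg (fun ω _ => (hY b).1) ω
  · rw [hτb] at h1 ⊢
    rw [indicator_of_mem (show ω ∈ {ω | Y b ω ≠ 1} from h1)]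

end HittingTime

section Dyadic

noncomputable def dyadicCeil (n : ℕ) (r : ℝ) : ℝ := ⌈r * 2 ^ n⌉ / 2 ^ n

variable {n : ℕ} {r : ℝ}

theorem le_dyadicCeil : r ≤ dyadicCeil n r := by
  rw [dyadicCeil, le_div_iff₀ (by positivity)]
  exact Int.le_ceil _

theorem dyadicCeil_lt : dyadicCeil n r < r + (2 ^ n)⁻¹ := by
  rw [dyadicCeil, div_lt_iff₀ (by positivity), add_mul, inv_mul_cancel₀ (by positivity)]
  exact Int.ceil_lt_add_one _

theorem dyadicCeil_le_iff {t : ℝ} : dyadicCeil n r ≤ t ↔ r ≤ ⌊t * 2 ^ n⌋ / 2 ^ n := by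
  rw [dyadicCeil, div_le_iff₀ (by positivity), le_div_iff₀ (by positivity), ← Int.ceil_le,
    ← Int.le_floor]

theorem dyadicCeil_mem_range : dyadicCeil n r ∈ range fun k : ℤ => (k : ℝ) / 2 ^ n :=
  ⟨_, rfl⟩

theorem tendsto_dyadicCeil (r : ℝ) : Tendsto (fun n => dyadicCeil n r) atTop (𝓝 r) := by
  have h : Tendsto (fun n : ℕ => r + (2 ^ n)⁻¹) atTop (𝓝 r) := by
    simpa using tendsto_const_nhds.add (tendsto_inv_atTop_zero.comp
      (tendsto_pow_atTop_atTop_of_one_lt (r := (2 : ℝ)) one_lt_two))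
  exact tendsto_of_tendsto_of_tendsto_of_le_of_le tendsto_const_nhds h
    (fun _ => le_dyadicCeil) fun _ => dyadicCeil_lt.le

theorem MeasureTheory.IsStoppingTime.dyadicCeil {Ω : Type*} {mΩ : MeasurableSpace Ω}
    {ℱ : Filtration ℝ mΩ} {τ : Ω → ℝ} (hτ : IsStoppingTime ℱ fun ω => (τ ω : WithTop ℝ))
    (n : ℕ) : IsStoppingTime ℱ fun ω => (dyadicCeil n (τ ω) : WithTop ℝ) := by
  intro t
  have hle : (⌊t * 2 ^ n⌋ : ℝ) / 2 ^ n ≤ t := by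
    rw [div_le_iff₀ (by positivity)]
    exact Int.floor_le _
  simpa only [WithTop.coe_le_coe, dyadicCeil_le_iff] using ℱ.mono hle _ (hτ _)

end Dyadic

section OptionalSampling

variable {Ω E : Type*} {mΩ : MeasurableSpace Ω} {μ : Measure Ω} [IsFiniteMeasure μ]
  [NormedAddCommGroup E] [NormedSpace ℝ E] [CompleteSpace E]

theorem MeasureTheory.Martingale.integral_stoppedValue_of_countable_range {ι : Type*}
    [LinearOrder ι] [TopologicalSpace ι] [OrderTopology ι] [FirstCountableTopology ι]
    [Nonempty ι] {ℱ : Filtration ι mΩ} {f : ι → Ω → E} (hf : Martingale f ℱ μ)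
    {τ : Ω → WithTop ι} (hτ : IsStoppingTime ℱ τ) {n : ι} (hτn : ∀ ω, τ ω ≤ n)
    (hτc : (range τ).Countable) :
    ∫ ω, stoppedValue f τ ω ∂μ = ∫ ω, f n ω ∂μ := by
  rw [integral_congr_ae (hf.stoppedValue_ae_eq_condExp_of_le_const_of_countable_range hτ hτn hτc),
    integral_condExp (hτ.measurableSpace_le_of_le hτn)]

/-- Proof: approximate `τ` from above by the countably-valued stopping times
`min (dyadicCeil k τ) T` and pass to the limit by dominated convergence. -/
theorem MeasureTheory.Martingale.integral_stoppedValue_of_continuous {ℱ : Filtration ℝ mΩ}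
    {f : ℝ → Ω → E} (hf : Martingale f ℱ μ) (hcont : ∀ ω, Continuous fun t => f t ω) {C : ℝ}
    (hC : ∀ t ω, ‖f t ω‖ ≤ C) {τ : Ω → ℝ} (hτ : IsStoppingTime ℱ fun ω => (τ ω : WithTop ℝ))
    {T : ℝ} (hτT : ∀ ω, τ ω ≤ T) :
    ∫ ω, stoppedValue f (fun ω => (τ ω : WithTop ℝ)) ω ∂μ = ∫ ω, f T ω ∂μ := by
  set σ : ℕ → Ω → WithTop ℝ := fun k ω => (min (dyadicCeil k (τ ω)) T : ℝ)
  have hσ : ∀ k, IsStoppingTime ℱ (σ k) := fun k => by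
    simpa only [σ, WithTop.coe_min] using (hτ.dyadicCeil k).min_const T
  have hσT : ∀ k ω, σ k ω ≤ T := fun k ω => WithTop.coe_le_coe.mpr (min_le_right _ _)
  have hσc : ∀ k, (range (σ k)).Countable := by
    intro k
    refine ((countable_range fun m : ℤ => (m : ℝ) / 2 ^ k).insert T).image
      (fun r : ℝ => (r : WithTop ℝ)) |>.mono ?_
    rintro _ ⟨ω, rfl⟩
    refine mem_image_of_mem _ ?_
    rcases min_choice (dyadicCeil k (τ ω)) T with h | h <;> rw [h]
    exacts [mem_insert_of_mem _ dyadicCeil_mem_range, mem_insert _ _]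
  have hlim : ∀ ω, Tendsto (fun k => stoppedValue f (σ k) ω) atTop
      (𝓝 (stoppedValue f (fun ω => (τ ω : WithTop ℝ)) ω)) := by
    intro ω
    have hστ : Tendsto (fun k => min (dyadicCeil k (τ ω)) T) atTop (𝓝 (τ ω)) := by
      simpa only [min_eq_left (hτT ω)] using
        (tendsto_dyadicCeil (τ ω)).min (tendsto_const_nhds (x := T))
    exact ((hcont ω).tendsto _).comp hστ
  have hprog := hf.stronglyAdapted.isStronglyProgressive_of_continuous hcont
  refine tendsto_nhds_unique (tendsto_integral_of_dominated_convergence (fun _ => C)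
    (fun k => ((stronglyMeasurable_stoppedValue_of_le hprog (hσ k) (hσT k)).mono
      (ℱ.le T)).aestronglyMeasurable) (integrable_const C)
    (fun k => ae_of_all _ fun ω => hC _ ω) (ae_of_all _ hlim)) ?_
  simp only [hf.integral_stoppedValue_of_countable_range (hσ _) (hσT _) (hσc _),
    tendsto_const_nhds]

end OptionalSampling

section ChangeOfMeasure

variable {Ω : Type*} {mΩ : MeasurableSpace Ω}

theorem integral_withDensity_ofReal {E : Type*} [NormedAddCommGroup E] [NormedSpace ℝ E]
    {μ : Measure Ω} {ρ : Ω → ℝ} (hρ : Measurable ρ) (hρ0 : ∀ ω, 0 ≤ ρ ω) (g : Ω → E) :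
    ∫ ω, g ω ∂μ.withDensity (fun ω => ENNReal.ofReal (ρ ω)) = ∫ ω, ρ ω • g ω ∂μ := by
  rw [integral_withDensity_eq_integral_toReal_smul hρ.ennreal_ofReal
    (ae_of_all _ fun _ => ENNReal.ofReal_lt_top)]
  simp only [ENNReal.toReal_ofReal (hρ0 _)]

variable {P Q : Measure Ω} {V : Ω → ℝ} {c : ℝ}

theorem integral_eq_of_eq_withDensity_one_sub [IsProbabilityMeasure P] [IsProbabilityMeasure Q]
    (hV : Measurable V) (hV01 : ∀ ω, V ω ∈ Icc (0 : ℝ) 1) (hc : c < 1)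
    (hPQ : P = Q.withDensity fun ω => ENNReal.ofReal ((1 - V ω) / (1 - c))) :
    ∫ ω, V ω ∂Q = c := by
  have hVint : Integrable V Q := .of_mem_Icc 0 1 hV.aemeasurable (ae_of_all _ hV01)
  have h1 : (1 : ℝ) = (1 - ∫ ω, V ω ∂Q) / (1 - c) := by
    calc (1 : ℝ) = ∫ _, (1 : ℝ) ∂P := by simp
      _ = ∫ ω, (1 - V ω) / (1 - c) ∂Q := by
        rw [hPQ, integral_withDensity_ofReal (by fun_prop)
          fun ω => div_nonneg (sub_nonneg.mpr (hV01 ω).2) (sub_nonneg.mpr hc.le)]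
        simp
      _ = (1 - ∫ ω, V ω ∂Q) / (1 - c) := by
        rw [integral_div, integral_sub (integrable_const 1) hVint]
        simp
  rw [eq_div_iff (sub_ne_zero.mpr hc.ne')] at h1
  linarith

/-- `V / (1 - V)` takes the junk value `0` on `{V = 1}`: this is the part of `Q` that `P` does not
see. -/
theorem integral_div_one_sub_of_eq_withDensity_one_sub (hV : Measurable V)
    (hV1 : ∀ ω, V ω ≤ 1) (hc : c < 1)
    (hPQ : P = Q.withDensity fun ω => ENNReal.ofReal ((1 - V ω) / (1 - c))) :
    ∫ ω, V ω / (1 - V ω) ∂P = (∫ ω, {ω | V ω ≠ 1}.indicator V ω ∂Q) / (1 - c) := by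
  rw [hPQ, integral_withDensity_ofReal (by fun_prop)
    fun ω => div_nonneg (sub_nonneg.mpr (hV1 ω)) (sub_nonneg.mpr hc.le), ← integral_div]
  refine integral_congr_ae (ae_of_all _ fun ω => ?_)
  by_cases h : V ω = 1
  · simp [h]
  · have : 1 - V ω ≠ 0 := sub_ne_zero.mpr (Ne.symm h)
    dsimp only
    rw [indicator_of_mem (show ω ∈ {ω | V ω ≠ 1} from h), smul_eq_mul]
    field_simp

end ChangeOfMeasure

theorem div_one_add_div_one_sub_div_one_add {z : ℝ} (hz : 1 + z ≠ 0) :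
    z / (1 + z) / (1 - z / (1 + z)) = z := by
  field_simp
  ring

theorem stmt14_general {Ω : Type*} {mΩ : MeasurableSpace Ω} (ℱ : Filtration ℝ mΩ)
    (P Q : Measure Ω) [IsProbabilityMeasure P] [IsProbabilityMeasure Q]
    (T x : ℝ) (hx : 0 < x)
    (X : ℝ → Ω → ℝ)
    (hXnn : ∀ s ω, 0 ≤ X s ω)
    (hstrict : ∫ ω, X T ω ∂P < x)
    (Y : ℝ → Ω → ℝ)
    (hYP : ∀ᵐ ω ∂P, ∀ s, Y s ω = X s ω / (1 + X s ω))
    (hY01 : ∀ s ω, 0 ≤ Y s ω ∧ Y s ω ≤ 1)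
    (hYcont : ∀ ω, Continuous fun s => Y s ω)
    (hYQ : Martingale Y ℱ Q)
    (hPQ : P = Q.withDensity fun ω =>
      ENNReal.ofReal ((1 - Y T ω) / (1 - x / (1 + x)))) :
    0 < Q {ω | stoppedValue Y (fun ω => ((hittingBtwn Y (Ioo (0:ℝ) 1)ᶜ 0 T ω : ℝ) : WithTop ℝ)) ω = 1} := by
  set y := x / (1 + x) with hy
  have hy1 : y < 1 := (div_lt_one (by linarith)).mpr (by linarith)
  set τ := hittingBtwn Y (Ioo (0:ℝ) 1)ᶜ 0 T
  set W := {ω | Y T ω ≠ 1}.indicator (Y T)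
  have hYT : Measurable (Y T) := ((hYQ.stronglyMeasurable T).mono (ℱ.le T)).measurable
  have hτ : IsStoppingTime ℱ fun ω => (τ ω : WithTop ℝ) :=
    hYQ.stronglyAdapted.isStoppingTime_hittingBtwn_of_continuous hYcont
      isOpen_Ioo.isClosed_compl ⟨2, by norm_num⟩
  have hEZ : ∫ ω, Y (τ ω) ω ∂Q = y :=
    (hYQ.integral_stoppedValue_of_continuous hYcont (C := 1)
      (fun t ω => abs_le.mpr ⟨by linarith [hY01 t ω], (hY01 t ω).2⟩) hτ
      fun ω => hittingBtwn_le ω).trans (integral_eq_of_eq_withDensity_one_sub hYT (hY01 T) hy1 hPQ)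
  have hEX : ∫ ω, X T ω ∂P = (∫ ω, W ω ∂Q) / (1 - y) := by
    rw [← integral_div_one_sub_of_eq_withDensity_one_sub hYT (fun ω => (hY01 T ω).2) hy1 hPQ]
    refine integral_congr_ae (hYP.mono fun ω hω => ?_)
    simp only [hω T, div_one_add_div_one_sub_div_one_add (by linarith [hXnn T ω] : 1 + X T ω ≠ 0)]
  by_contra hA
  have hZ1 : ∀ᵐ ω ∂Q, Y (τ ω) ω ≠ 1 :=
    measure_eq_zero_iff_ae_notMem.mp (le_zero_iff.mp (not_lt.mp hA))
  have hyX : y ≤ (1 - y) * ∫ ω, X T ω ∂P := by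
    rw [hEX, mul_div_cancel₀ _ (sub_ne_zero.mpr hy1.ne'), ← hEZ]
    exact integral_mono_of_nonneg (ae_of_all _ fun ω => (hY01 _ ω).1)
      ((hYQ.integrable T).indicator (hYT (measurableSet_singleton 1)).compl)
      (hZ1.mono fun ω => apply_hittingBtwn_compl_Ioo_le_of_ne_one (hY01 · ω) (hYcont ω))
  have hxy : (1 - y) * x = y := by
    rw [hy]
    field_simp
    ring
  linarith [mul_lt_mul_of_pos_left hstrict (sub_pos.mpr hy1)]

/-- Let `X` be a nonnegative continuous local martingale under `P`
with `X_0 = x > 0` which is a strict local martingale (`E_P[X_T] < x`). Let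
`Y = X/(1+X)` (`P`-a.s.), `y = x/(1+x)`, and `τ` the exit time of `(0,1)` for `Y`
capped at `T`. If `Q` is a probability under which `Y` is a martingale and
`dP = ((1-Y_T)/(1-y)) dQ`, then `Q(Y_τ = 1) > 0`. -/
theorem stmt14 {Ω : Type*} {mΩ : MeasurableSpace Ω} (ℱ : Filtration ℝ mΩ)
    (P Q : Measure Ω) [IsProbabilityMeasure P] [IsProbabilityMeasure Q]
    (T x : ℝ) (hT : 0 < T) (hx : 0 < x)
    (X : ℝ → Ω → ℝ)
    (hXcont : ∀ ω, Continuous fun s => X s ω)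
    (hXnn : ∀ s ω, 0 ≤ X s ω)
    (hX0 : ∀ ω, X 0 ω = x)
    (hXloc : IsLocMart ℱ X P)
    (hstrict : ∫ ω, X T ω ∂P < x)
    (Y : ℝ → Ω → ℝ)
    (hYP : ∀ᵐ ω ∂P, ∀ s, Y s ω = X s ω / (1 + X s ω))
    (hY01 : ∀ s ω, 0 ≤ Y s ω ∧ Y s ω ≤ 1)
    (hYcont : ∀ ω, Continuous fun s => Y s ω)
    (hYQ : Martingale Y ℱ Q)
    (hPQ : P = Q.withDensity fun ω =>
      ENNReal.ofReal ((1 - Y T ω) / (1 - x / (1 + x)))) :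
    0 < Q {ω | stoppedValue Y (fun ω => ((hittingBtwn Y (Ioo (0:ℝ) 1)ᶜ 0 T ω : ℝ) : WithTop ℝ)) ω = 1} :=
  stmt14_general ℱ P Q T x hx X hXnn hstrict Y hYP hY01 hYcont hYQ hPQ
end

section
/- Let σ : ℝ → ℝ be continuous with σ(x) > 0 for x > 0 and σ(x) = 0 for x ≤ 0. Then there exists a sequence σ_n of continuous functions with: σ_n(x) > 0 for x > 0 and σ_n(x) = 0 for x ≤ 0; each σ_n is locally Hölder continuous on (0,∞) with some exponent δ_n ∈ (0,1]; σ_n ↑ σ pointwise; and for every compact K ⊂ (0,∞), max_{x∈K} (1/σ_n(x)² − 1/σ(x)²) < 1/n. -/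
/-!
The functions `l_n = σ / √(1 + σ² / (n + 1))` satisfy `1 / l_n² = 1 / σ² + 1 / (n + 1)`,
`0 < l_n < σ` on `(0, ∞)` and `l_n → σ`. After the substitution `x = exp t` the strip between
`l_n` and `σ` is open over the whole line, so smooth partitions of unity give, recursively,
smooth functions `G_n` inside it with `G_{n-1} ≤ G_n`. Then `σ_n = G_n ∘ log` on `(0, ∞)`,
`σ_n = 0` elsewhere, is `C¹` (hence Lipschitz on compacts) on `(0, ∞)`, continuous at `0`
because `0 < σ_n < σ` there, increases to `σ`, and `1 / σ_n² < 1 / l_n²` gives the bound.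
-/

open Filter Topology Set

section Smoothing

variable {E : Type*} [NormedAddCommGroup E] [NormedSpace ℝ E] [FiniteDimensional ℝ E]

open scoped ContDiff Manifold in
lemma exists_contDiff_between {L U : E → ℝ} (hL : Continuous L) (hU : Continuous U)
    (h : ∀ x, L x < U x) : ∃ G : E → ℝ, ContDiff ℝ ∞ G ∧ ∀ x, L x < G x ∧ G x < U x := by
  obtain ⟨G, hG⟩ := exists_contMDiffMap_forall_mem_convex_of_local_const 𝓘(ℝ, E)
    (n := (⊤ : ℕ∞)) (t := fun x => Ioo (L x) (U x)) (fun _ => convex_Ioo _ _) fun x =>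
      ⟨(L x + U x) / 2,
        (hL.continuousAt.eventually_lt continuousAt_const (by linarith [h x])).and
          (continuousAt_const.eventually_lt hU.continuousAt (by linarith [h x]))⟩
  exact ⟨G, contMDiff_iff_contDiff.mp G.contMDiff, hG⟩

open scoped ContDiff in
lemma exists_monotone_contDiff_between {L : ℕ → E → ℝ} {U : E → ℝ}
    (hL : ∀ n, Continuous (L n)) (hU : Continuous U) (h : ∀ n x, L n x < U x) :
    ∃ G : ℕ → E → ℝ, (∀ n, ContDiff ℝ ∞ (G n)) ∧ (∀ n x, L n x < G n x ∧ G n x < U x) ∧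
      ∀ x, Monotone (G · x) := by
  let Below := {g : E → ℝ // Continuous g ∧ ∀ x, g x < U x}
  have step (n : ℕ) (g : Below) : ∃ g' : E → ℝ, ContDiff ℝ ∞ g' ∧
      ∀ x, max (L n x) (g.1 x) < g' x ∧ g' x < U x :=
    exists_contDiff_between ((hL n).max g.2.1) hU fun x => max_lt (h n x) (g.2.2 x)
  choose next hnext_smooth hnext using step
  let H : ℕ → Below := fun n => n.rec ⟨L 0, hL 0, h 0⟩ fun k g =>
    ⟨next k g, (hnext_smooth k g).continuous, fun x => (hnext k g x).2⟩
  refine ⟨fun n => next n (H n), fun n => hnext_smooth n (H n),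
    fun n x => ⟨(le_max_left _ _).trans_lt (hnext n (H n) x).1, (hnext n (H n) x).2⟩,
    fun x => monotone_nat_of_le_succ fun n => ?_⟩
  exact ((le_max_right _ _).trans_lt (hnext (n + 1) (H (n + 1)) x).1).le

end Smoothing

lemma ContDiffOn.exists_lipschitzOnWith_of_subset {E F : Type*} [NormedAddCommGroup E]
    [NormedSpace ℝ E] [NormedAddCommGroup F] [NormedSpace ℝ F] {f : E → F} {s K : Set E}
    (hf : ContDiffOn ℝ 1 f s) (hs : Convex ℝ s) (hKs : K ⊆ s) (hK : IsCompact K) :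
    ∃ C, LipschitzOnWith C f K :=
  ((hf.locallyLipschitzOn hs).mono hKs).exists_lipschitzOnWith_of_compact hK

lemma continuous_indicator_Ioi_of_norm_le {F G : Type*} [NormedAddCommGroup F]
    [NormedAddCommGroup G] {f : ℝ → F} {g : ℝ → G} (hf : ContinuousOn f (Ioi 0))
    (hg : ContinuousAt g 0) (hg0 : g 0 = 0) (hfg : ∀ x > 0, ‖f x‖ ≤ ‖g x‖) :
    Continuous ((Ioi 0).indicator f) := by
  refine continuous_iff_continuousAt.2 fun x => ?_
  rcases lt_trichotomy x 0 with hx | rfl | hx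
  · exact continuousAt_const.congr <| (eventually_lt_nhds hx).mono fun y hy =>
      (indicator_of_notMem (notMem_Ioi.2 hy.le) f).symm
  · have hnorm (y : ℝ) : ‖(Ioi 0).indicator f y‖ ≤ ‖g y‖ := by
      by_cases hy : 0 < y
      · simpa [indicator_of_mem (mem_Ioi.2 hy)] using hfg y hy
      · simp [indicator_of_notMem (notMem_Ioi.2 (not_lt.1 hy))]
    have hg' : Tendsto g (𝓝 0) (𝓝 0) := hg0 ▸ hg
    simpa [ContinuousAt] using squeeze_zero_norm hnorm (tendsto_norm_zero.comp hg')
  · exact (hf.continuousAt (Ioi_mem_nhds hx)).congr <| (eventually_gt_nhds hx).mono fun y hy =>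
      (indicator_of_mem (mem_Ioi.2 hy) f).symm

section LowerEnvelope

lemma one_div_sq_div_sqrt {s c : ℝ} (hs : s ≠ 0) (hc : 0 ≤ c) :
    1 / (s / √(1 + c * s ^ 2)) ^ 2 = 1 / s ^ 2 + c := by
  rw [div_pow, Real.sq_sqrt (by positivity)]
  field_simp

lemma one_div_sq_sub_one_div_sq_lt {a s c : ℝ} (hs : 0 < s) (hc : 0 ≤ c)
    (ha : s / √(1 + c * s ^ 2) < a) : 1 / a ^ 2 - 1 / s ^ 2 < c := by
  have : 0 < s / √(1 + c * s ^ 2) := by positivity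
  calc 1 / a ^ 2 - 1 / s ^ 2 < 1 / (s / √(1 + c * s ^ 2)) ^ 2 - 1 / s ^ 2 := by gcongr
    _ = c := by rw [one_div_sq_div_sqrt hs.ne' hc]; ring

lemma div_sqrt_lt_self {s c : ℝ} (hs : 0 < s) (hc : 0 < c) : s / √(1 + c * s ^ 2) < s :=
  div_lt_self hs (Real.lt_sqrt_of_sq_lt (by nlinarith [mul_pos hc (pow_pos hs 2)]))

lemma tendsto_div_sqrt (s : ℝ) :
    Tendsto (fun n : ℕ => s / √(1 + 1 / ((n : ℝ) + 1) * s ^ 2)) atTop (𝓝 s) := by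
  have hcont : ContinuousAt (fun c : ℝ => s / √(1 + c * s ^ 2)) 0 := by
    fun_prop (disch := simp)
  simpa [Function.comp_def] using hcont.tendsto.comp tendsto_one_div_add_atTop_nhds_zero_nat

end LowerEnvelope

/-- Existence of the approximating sequence `σ_n` for a continuous
`σ` vanishing on `(-∞,0]` and positive on `(0,∞)`: each `σ_n` is continuous,
positive on `(0,∞)`, zero on `(-∞,0]`, locally Hölder continuous on `(0,∞)` with
some exponent `δ_n ∈ (0,1]`, `σ_n ↑ σ` pointwise, and
`1/σ_n(x)² - 1/σ(x)² < 1/n` on every compact subset of `(0,∞)`. -/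
theorem stmt17 (σ : ℝ → ℝ) (hc : Continuous σ)
    (hpos : ∀ x > (0:ℝ), 0 < σ x) (h0 : ∀ x ≤ (0:ℝ), σ x = 0) :
    ∃ σn : ℕ → ℝ → ℝ,
      (∀ n, Continuous (σn n)) ∧
      (∀ n, ∀ x > (0:ℝ), 0 < σn n x) ∧
      (∀ n, ∀ x ≤ (0:ℝ), σn n x = 0) ∧
      (∀ n, ∃ δ : NNReal, 0 < δ ∧ δ ≤ 1 ∧
        ∀ K : Set ℝ, K ⊆ Ioi 0 → IsCompact K → ∃ C : NNReal, HolderOnWith C δ (σn n) K) ∧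
      (∀ x, Monotone fun n => σn n x) ∧
      (∀ x, Tendsto (fun n => σn n x) atTop (𝓝 (σ x))) ∧
      (∀ n : ℕ, ∀ K : Set ℝ, K ⊆ Ioi 0 → IsCompact K →
        ∀ x ∈ K, 1 / σn n x ^ 2 - 1 / σ x ^ 2 < 1 / ((n : ℝ) + 1)) := by
  set l : ℕ → ℝ → ℝ := fun n x => σ x / √(1 + 1 / ((n : ℝ) + 1) * σ x ^ 2)
  have hl_pos (n : ℕ) (x : ℝ) (hx : 0 < x) : 0 < l n x := by have := hpos x hx; positivity
  have hl_cont (n : ℕ) : Continuous (l n) := hc.div (by fun_prop) fun x => by positivity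
  obtain ⟨G, hG_smooth, hG_between, hG_mono⟩ := exists_monotone_contDiff_between
    (L := fun n t => l n (Real.exp t)) (U := σ ∘ Real.exp)
    (fun n => (hl_cont n).comp Real.continuous_exp) (by fun_prop)
    fun n t => div_sqrt_lt_self (hpos _ (Real.exp_pos t)) (by positivity)
  have hbetween (n : ℕ) (x : ℝ) (hx : 0 < x) :
      l n x < G n (Real.log x) ∧ G n (Real.log x) < σ x := by
    simpa [Real.exp_log hx] using hG_between n (Real.log x)
  have hsmooth (n : ℕ) : ContDiffOn ℝ 1 (G n ∘ Real.log) (Ioi 0) :=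
    ((hG_smooth n).of_le (mod_cast le_top)).comp_contDiffOn
      (Real.contDiffOn_log.mono fun _ hx => (mem_Ioi.1 hx).ne')
  refine ⟨fun n => (Ioi 0).indicator (G n ∘ Real.log), fun n => ?_, fun n x hx => ?_,
    fun n x hx => indicator_of_notMem (notMem_Ioi.2 hx) _,
    fun n => ⟨1, one_pos, le_rfl, fun K hK hKc => ?_⟩,
    fun x m n hmn => indicator_le_indicator (hG_mono _ hmn), fun x => ?_,
    fun n K hK _ x hx => ?_⟩
  · refine continuous_indicator_Ioi_of_norm_le (hsmooth n).continuousOn hc.continuousAt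
      (h0 0 le_rfl) fun x hx => ?_
    simpa [abs_of_pos ((hl_pos n x hx).trans (hbetween n x hx).1), abs_of_pos (hpos x hx)]
      using (hbetween n x hx).2.le
  · simpa [indicator_of_mem (mem_Ioi.2 hx)] using (hl_pos n x hx).trans (hbetween n x hx).1
  · obtain ⟨C, hC⟩ := ((hsmooth n).congr fun x hx => indicator_of_mem hx _)
      |>.exists_lipschitzOnWith_of_subset (convex_Ioi 0) hK hKc
    exact ⟨C, hC.holderOnWith⟩
  · rcases le_or_gt x 0 with hx | hx
    · simp [indicator_of_notMem (notMem_Ioi.2 hx), h0 x hx]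
    · simp only [indicator_of_mem (mem_Ioi.2 hx)]
      exact tendsto_of_tendsto_of_tendsto_of_le_of_le (tendsto_div_sqrt (σ x))
        tendsto_const_nhds (fun n => (hbetween n x hx).1.le) fun n => (hbetween n x hx).2.le
  · simp only [indicator_of_mem (hK hx)]
    exact one_div_sq_sub_one_div_sq_lt (hpos x (hK hx)) (by positivity) (hbetween n x (hK hx)).1
end
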